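/- arXiv:2311.05214 — 11 statements merged into one kernel-verified Lean document; each statement's English description precedes it below -/
import Mathlib

section
/- Let V be a finite-dimensional real vector space, let Λ ⊆ V be a full lattice (a discrete additive subgroup that spans V over ℝ), and let σ : V → V be an ℝ-linear involution (σ ∘ σ = id) with σ(Λ) = Λ. Let T = V/Λ be the quotient topological group, let σ̄ : T → T be the automorphism induced by σ, and let F = {x ∈ T : σ̄(x) = x} be the fixed-point subgroup with the subspace topology. Then the group of connected components π₀F = F / F° (where F° is the identity component of F) is isomorphic, as a group, to the quotient (Λ ∩ {v ∈ V : σ(v) = −v}) / (1 − σ)(Λ). Moreover, under this isomorphism the class of an element μ ∈ Λ with σ(μ) = −μ corresponds to the connected component of F containing the point (1/2)μ + Λ. -/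
set_option maxHeartbeats 1000000


/-- **Component group of the fixed locus of an involution of a real torus.**
Let `Λ` be a full lattice in a finite-dimensional real vector space `V`, let
`σ : V → V` be a linear involution with `σ(Λ) = Λ`, let `σbar` be the induced
automorphism of the torus `T = V/Λ`, and let `F` be its fixed-point subgroup.
Then `π₀F = F/F°` is isomorphic to `(Λ ∩ V^{-σ}) / (1 - σ)(Λ)`, where the
class of `μ ∈ Λ ∩ V^{-σ}` corresponds to the connected component of `F`
containing `(1/2)μ + Λ`. -/
theorem pi0_fixed_locus_of_torus_involution
    (V : Type*) [NormedAddCommGroup V] [NormedSpace ℝ V] [FiniteDimensional ℝ V]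
    (Λ : AddSubgroup V) [DiscreteTopology Λ]
    (hspan : Submodule.span ℝ (Λ : Set V) = ⊤)
    (σ : V →ₗ[ℝ] V) (hinv : σ ∘ₗ σ = LinearMap.id)
    (hσΛ : AddSubgroup.map σ.toAddMonoidHom Λ = Λ)
    (σbar : V ⧸ Λ →+ V ⧸ Λ)
    (hσbar : ∀ v : V, σbar (QuotientAddGroup.mk v) = QuotientAddGroup.mk (σ v))
    (F : AddSubgroup (V ⧸ Λ)) (hF : ∀ x : V ⧸ Λ, x ∈ F ↔ σbar x = x)
    -- `Λm = Λ ∩ {v : V | σ v = -v}` and `N = (1 - σ)(Λ)`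
    (Λm : AddSubgroup V) (hΛm : ∀ v : V, v ∈ Λm ↔ v ∈ Λ ∧ σ v = -v)
    (N : AddSubgroup V) (hN : ∀ v : V, v ∈ N ↔ ∃ lam ∈ Λ, v = lam - σ lam) :
    ∃ e : (↥Λm ⧸ N.addSubgroupOf Λm) ≃+
        (↥F ⧸ AddSubgroup.connectedComponentOfZero ↥F),
      ∀ (μ : V) (hμ : μ ∈ Λm),
        ∃ hFμ : (QuotientAddGroup.mk ((2⁻¹ : ℝ) • μ) : V ⧸ Λ) ∈ F,
          e (QuotientAddGroup.mk (⟨μ, hμ⟩ : ↥Λm)) =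
            QuotientAddGroup.mk
              (⟨QuotientAddGroup.mk ((2⁻¹ : ℝ) • μ), hFμ⟩ : ↥F) := by
  classical
  have hσσ : ∀ v : V, σ (σ v) = v := fun v => congrArg (fun f => f v) (congrArg (fun f => f.toFun) hinv)
  -- membership in F
  have hmemF : ∀ v : V, (QuotientAddGroup.mk v : V ⧸ Λ) ∈ F ↔ σ v - v ∈ Λ := by
    intro v
    rw [hF, hσbar, QuotientAddGroup.eq_iff_sub_mem]
  -- the +1 eigenspace
  set Wp : Submodule ℝ V := LinearMap.ker (σ - LinearMap.id) with hWpdef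
  have hWpmem : ∀ v : V, v ∈ Wp ↔ σ v = v := by
    intro v
    simp [hWpdef, LinearMap.mem_ker, sub_eq_zero]
  -- the image of the +1 eigenspace in the torus
  set π : V →+ V ⧸ Λ := QuotientAddGroup.mk' Λ with hπdef
  set H : AddSubgroup (V ⧸ Λ) := AddSubgroup.map π Wp.toAddSubgroup with hHdef
  have hHmem : ∀ x : V ⧸ Λ, x ∈ H ↔ ∃ w : V, σ w = w ∧ QuotientAddGroup.mk w = x := by
    intro x
    constructor
    · rintro ⟨w, hw, rfl⟩
      exact ⟨w, (hWpmem w).1 hw, rfl⟩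
    · rintro ⟨w, hw, rfl⟩
      exact ⟨w, (hWpmem w).2 hw, rfl⟩
  have hHF : H ≤ F := by
    rintro x hx
    obtain ⟨w, hw, rfl⟩ := (hHmem x).1 hx
    rw [hmemF, hw, sub_self]
    exact zero_mem Λ
  set HF : AddSubgroup ↥F := H.addSubgroupOf F with hHFdef
  have hHFmem : ∀ x : ↥F, x ∈ HF ↔ (x : V ⧸ Λ) ∈ H := fun x => Iff.rfl
  -- HF is open
  -- discreteness of Λ: small lattice vectors vanish
  obtain ⟨ε, hε, hdisc⟩ : ∃ ε > (0:ℝ), ∀ v ∈ Λ, ‖v‖ < ε → v = 0 := by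
    have hop : IsOpen ({0} : Set ↥Λ) := isOpen_discrete _
    obtain ⟨ε, hε, hball⟩ := Metric.isOpen_iff.1 hop 0 rfl
    refine ⟨ε, hε, fun v hv hnorm => ?_⟩
    have : (⟨v, hv⟩ : ↥Λ) ∈ Metric.ball (0 : ↥Λ) ε := by
      rw [Metric.mem_ball, Subtype.dist_eq]
      simpa using hnorm
    simpa using Subtype.ext_iff.1 (hball this)
  -- a bound for σ
  set σc : V →L[ℝ] V := LinearMap.toContinuousLinearMap σ with hσcdef
  set C : ℝ := ‖σc‖ with hCdef
  have hC0 : 0 ≤ C := norm_nonneg _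
  have hCb : ∀ v : V, ‖σ v‖ ≤ C * ‖v‖ := fun v => σc.le_opNorm v
  set δ : ℝ := ε / (C + 2) with hδdef
  have hδ : 0 < δ := div_pos hε (by linarith)
  have hopen : IsOpen (HF : Set ↥F) := by
    apply AddSubgroup.isOpen_of_mem_nhds (g := (0 : ↥F))
    have hU : IsOpen (QuotientAddGroup.mk '' Metric.ball (0:V) δ : Set (V ⧸ Λ)) :=
      QuotientAddGroup.isOpenMap_coe _ Metric.isOpen_ball
    have hsub : (Subtype.val ⁻¹' (QuotientAddGroup.mk '' Metric.ball (0:V) δ) : Set ↥F)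
        ⊆ (HF : Set ↥F) := by
      rintro ⟨x, hxF⟩ hx
      obtain ⟨v, hv, hveq⟩ := hx
      have hvF : (QuotientAddGroup.mk v : V ⧸ Λ) ∈ F := by rw [hveq]; exact hxF
      have hl : σ v - v ∈ Λ := (hmemF v).1 hvF
      have hnorm : ‖σ v - v‖ < ε := by
        have h1 : ‖σ v - v‖ ≤ ‖σ v‖ + ‖v‖ := norm_sub_le _ _
        have h2 : ‖v‖ < δ := by simpa using hv
        have h3 : ‖σ v‖ ≤ C * ‖v‖ := hCb v
        have h4 : (C + 1) * δ < ε := by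
          rw [hδdef]
          rw [mul_div_assoc', div_lt_iff₀ (by linarith : (0:ℝ) < C + 2)]
          nlinarith
        nlinarith [norm_nonneg v]
      have hv0 : σ v - v = 0 := hdisc _ hl hnorm
      have hσv : σ v = v := sub_eq_zero.1 hv0
      show (⟨x, hxF⟩ : ↥F) ∈ HF
      exact (hHFmem _).2 ((hHmem _).2 ⟨v, hσv, hveq⟩)
    refine Filter.mem_of_superset ?_ hsub
    apply (continuous_subtype_val.isOpen_preimage _ hU).mem_nhds
    refine Set.mem_preimage.2 ⟨0, Metric.mem_ball_self hδ, ?_⟩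
    simp
  -- HF is preconnected
  have hconn : IsPreconnected (HF : Set ↥F) := by
    set g : ↥Wp → ↥F := fun w =>
      (⟨QuotientAddGroup.mk (w : V), hHF ((hHmem _).2 ⟨(w : V), (hWpmem _).1 w.2, rfl⟩)⟩ : ↥F)
      with hgdef
    have hg : Continuous g := by
      apply Continuous.subtype_mk
      exact QuotientAddGroup.continuous_mk.comp continuous_subtype_val
    have himg : (HF : Set ↥F) = g '' Set.univ := by
      ext x
      simp only [Set.image_univ, Set.mem_range]
      constructor
      · intro hx
        obtain ⟨w, hw, hweq⟩ := (hHmem _).1 ((hHFmem x).1 hx)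
        exact ⟨⟨w, (hWpmem w).2 hw⟩, Subtype.ext hweq⟩
      · rintro ⟨w, rfl⟩
        exact (hHFmem _).2 ((hHmem _).2 ⟨(w : V), (hWpmem _).1 w.2, rfl⟩)
    rw [himg]
    exact IsPreconnected.image
      ((convex_univ : Convex ℝ (Set.univ : Set ↥Wp)).isPreconnected) g hg.continuousOn
  -- HF is the identity component
  have hcc : AddSubgroup.connectedComponentOfZero ↥F = HF := by
    have hclosed : IsClosed (HF : Set ↥F) := HF.isClosed_of_isOpen hopen
    have h1 : (HF : Set ↥F) ⊆ connectedComponent (0 : ↥F) :=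
      hconn.subset_connectedComponent (zero_mem HF)
    have h2 : connectedComponent (0 : ↥F) ⊆ (HF : Set ↥F) :=
      IsClopen.connectedComponent_subset ⟨hclosed, hopen⟩ (zero_mem HF)
    apply AddSubgroup.ext
    intro x
    exact ⟨fun h => h2 h, fun h => h1 h⟩
  -- the half-point map
  have hhalf : ∀ μ : V, μ ∈ Λm → (QuotientAddGroup.mk ((2⁻¹ : ℝ) • μ) : V ⧸ Λ) ∈ F := by
    intro μ hμ
    obtain ⟨hμΛ, hμσ⟩ := (hΛm μ).1 hμ
    rw [hmemF]
    have h2 : σ ((2⁻¹ : ℝ) • μ) - (2⁻¹ : ℝ) • μ = -μ := by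
      rw [map_smul, hμσ]; module
    rw [h2]
    exact neg_mem hμΛ
  set f : ↥Λm →+ ↥F := AddMonoidHom.mk'
    (fun μ => ⟨QuotientAddGroup.mk ((2⁻¹ : ℝ) • (μ : V)), hhalf _ μ.2⟩)
    (by
      intro a b
      apply Subtype.ext
      show (QuotientAddGroup.mk ((2⁻¹:ℝ) • ((a:V) + (b:V))) : V ⧸ Λ) = _
      rw [smul_add]
      rfl) with hfdef
  set φ : ↥Λm →+ (↥F ⧸ AddSubgroup.connectedComponentOfZero ↥F) :=
    (QuotientAddGroup.mk' _).comp f with hφdef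
  have hkey : ∀ μ : ↥Λm, φ μ = 0 ↔ f μ ∈ HF := by
    intro μ
    show (QuotientAddGroup.mk (f μ) : _) = 0 ↔ _
    rw [QuotientAddGroup.eq_zero_iff, hcc]
  have hker : φ.ker = N.addSubgroupOf Λm := by
    apply AddSubgroup.ext
    intro μ
    obtain ⟨hμΛ, hμσ⟩ := (hΛm (μ : V)).1 μ.2
    rw [AddMonoidHom.mem_ker, hkey]
    have hR : μ ∈ N.addSubgroupOf Λm ↔ (μ : V) ∈ N := AddSubgroup.mem_addSubgroupOf
    have hL : f μ ∈ HF ↔ ((f μ : ↥F) : V ⧸ Λ) ∈ H := Iff.rfl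
    rw [hR, hL, hN]
    constructor
    · intro h1
      obtain ⟨w, hw, hweq⟩ := (hHmem _).1 h1
      have hlam : w - (2⁻¹ : ℝ) • (μ : V) ∈ Λ := by
        rw [← QuotientAddGroup.eq_iff_sub_mem]
        exact hweq
      refine ⟨-(w - (2⁻¹ : ℝ) • (μ : V)), neg_mem hlam, ?_⟩
      have hσw : σ (-(w - (2⁻¹ : ℝ) • (μ : V))) = -w - (2⁻¹ : ℝ) • (μ : V) := by
        rw [map_neg, map_sub, map_smul, hμσ, hw]
        module
      rw [hσw]
      module
    · intro h1
      obtain ⟨lam, hlamΛ, hlameq'⟩ := h1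
      have hlameq : (μ : V) = lam - σ lam := hlameq'
      refine (hHmem _).2 ⟨(2⁻¹ : ℝ) • (μ : V) - lam, ?_, ?_⟩
      · rw [map_sub, map_smul, hμσ, hlameq]
        module
      · show (QuotientAddGroup.mk ((2⁻¹ : ℝ) • (μ : V) - lam) : V ⧸ Λ)
          = QuotientAddGroup.mk ((2⁻¹ : ℝ) • (μ : V))
        rw [QuotientAddGroup.eq_iff_sub_mem]
        have h2 : (2⁻¹ : ℝ) • (μ : V) - lam - (2⁻¹ : ℝ) • (μ : V) = -lam := by module
        exact h2 ▸ neg_mem hlamΛ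
  have hsurj : Function.Surjective φ := by
    intro y
    obtain ⟨x, rfl⟩ := QuotientAddGroup.mk'_surjective _ y
    obtain ⟨v, hv⟩ := QuotientAddGroup.mk_surjective ((x : ↥F) : V ⧸ Λ)
    have hxF : (QuotientAddGroup.mk v : V ⧸ Λ) ∈ F := by rw [hv]; exact (x : ↥F).2
    have hl : σ v - v ∈ Λ := (hmemF v).1 hxF
    have hμm : v - σ v ∈ Λm := by
      rw [hΛm]
      constructor
      · have : v - σ v = -(σ v - v) := by module
        exact this ▸ neg_mem hl
      · rw [map_sub, hσσ]
        module
    refine ⟨⟨v - σ v, hμm⟩, ?_⟩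
    show (QuotientAddGroup.mk (f ⟨v - σ v, hμm⟩) : _) = QuotientAddGroup.mk x
    rw [QuotientAddGroup.eq_iff_sub_mem, hcc]
    refine (hHFmem _).2 ((hHmem _).2 ⟨(2⁻¹ : ℝ) • (v - σ v) - v, ?_, ?_⟩)
    · rw [map_sub, map_smul, map_sub, hσσ]
      module
    · show (QuotientAddGroup.mk ((2⁻¹ : ℝ) • (v - σ v) - v) : V ⧸ Λ)
        = ((f ⟨v - σ v, hμm⟩ - x : ↥F) : V ⧸ Λ)
      have : ((f ⟨v - σ v, hμm⟩ - x : ↥F) : V ⧸ Λ)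
          = QuotientAddGroup.mk ((2⁻¹ : ℝ) • (v - σ v)) - QuotientAddGroup.mk v := by
        rw [AddSubgroup.coe_sub, hv]
        rfl
      rw [this, ← QuotientAddGroup.mk_sub]
  refine ⟨(QuotientAddGroup.quotientAddEquivOfEq hker.symm).trans
    (QuotientAddGroup.quotientKerEquivOfSurjective φ hsurj), ?_⟩
  intro μ hμ
  refine ⟨hhalf μ hμ, ?_⟩
  show QuotientAddGroup.kerLift φ (QuotientAddGroup.mk (⟨μ, hμ⟩ : ↥Λm)) = _
  rw [QuotientAddGroup.kerLift_mk]
  rfl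
end

section
/- Let V be a finite-dimensional real vector space, let Λ ⊆ V be a full lattice (a discrete additive subgroup that spans V over ℝ), and let σ : V → V be an ℝ-linear involution with σ(Λ) = Λ. Let T = V/Λ be the quotient topological group, σ̄ : T → T the induced automorphism, and F = {x ∈ T : σ̄(x) = x} the fixed-point subgroup. Then the identity component F° of F equals the image under the quotient map V → V/Λ of the fixed subspace V^σ = {v ∈ V : σ(v) = v}. -/
/-- **Identity component of the fixed locus of an involution of a real torus.**
With `Λ` a full lattice in a finite-dimensional real vector space `V`, `σ` a
linear involution of `V` preserving `Λ`, `σbar` the induced automorphism of the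
torus `T = V/Λ`, and `F` its fixed-point subgroup, the identity component `F°`
of `F` equals the image in `V/Λ` of the fixed subspace `V^σ = {v : σ v = v}`. -/
theorem identity_component_of_fixed_locus
    (V : Type*) [NormedAddCommGroup V] [NormedSpace ℝ V] [FiniteDimensional ℝ V]
    (Λ : AddSubgroup V) [DiscreteTopology Λ]
    (hspan : Submodule.span ℝ (Λ : Set V) = ⊤)
    (σ : V →ₗ[ℝ] V) (hinv : σ ∘ₗ σ = LinearMap.id)
    (hσΛ : AddSubgroup.map σ.toAddMonoidHom Λ = Λ)
    (σbar : V ⧸ Λ →+ V ⧸ Λ)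
    (hσbar : ∀ v : V, σbar (QuotientAddGroup.mk v) = QuotientAddGroup.mk (σ v))
    (F : AddSubgroup (V ⧸ Λ)) (hF : ∀ x : V ⧸ Λ, x ∈ F ↔ σbar x = x) :
    Subtype.val '' (connectedComponent (0 : ↥F)) =
      (fun v : V => (QuotientAddGroup.mk v : V ⧸ Λ)) '' {v : V | σ v = v} := by
  classical
  -- the fixed subgroup of V
  set K : AddSubgroup V :=
    { carrier := {v : V | σ v = v}
      zero_mem' := map_zero σ
      add_mem' := by intro a b ha hb; simp only [Set.mem_setOf_eq] at *; rw [map_add, ha, hb]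
      neg_mem' := by intro a ha; simp only [Set.mem_setOf_eq] at *; rw [map_neg, ha] } with hK
  set H : AddSubgroup (V ⧸ Λ) := K.map (QuotientAddGroup.mk' Λ) with hH
  have hHset : ((fun v : V => (QuotientAddGroup.mk v : V ⧸ Λ)) '' {v : V | σ v = v}) = (H : Set (V ⧸ Λ)) := by
    rfl
  rw [hHset]
  -- continuity of σ
  have σcont : Continuous σ := σ.continuous_of_finiteDimensional
  set σc : V →L[ℝ] V := LinearMap.toContinuousLinearMap σ with hσc
  -- separation radius of the lattice
  obtain ⟨ε₀, hε₀, hsep⟩ : ∃ ε > (0:ℝ), ∀ l ∈ Λ, ‖l‖ < ε → l = 0 := by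
    have h0 : IsOpen ({0} : Set Λ) := isOpen_discrete _
    rw [isOpen_induced_iff] at h0
    obtain ⟨U, hU, hUeq⟩ := h0
    have h0U : (0 : V) ∈ U := by
      have : (0 : Λ) ∈ (Subtype.val ⁻¹' U : Set Λ) := by rw [hUeq]; rfl
      exact this
    obtain ⟨ε, hε, hball⟩ := Metric.isOpen_iff.mp hU 0 h0U
    refine ⟨ε, hε, fun l hl hln => ?_⟩
    have : (⟨l, hl⟩ : Λ) ∈ (Subtype.val ⁻¹' U : Set Λ) := by
      apply hball
      simpa [Metric.mem_ball, dist_eq_norm] using hln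
    rw [hUeq] at this
    exact congrArg Subtype.val this
  set ε : ℝ := ε₀ / (‖σc‖ + 2) with hε
  have hεpos : 0 < ε := div_pos hε₀ (by positivity)
  apply Set.Subset.antisymm
  · -- F° ⊆ H
    set S : AddSubgroup F := H.comap F.subtype with hS
    have hnhds : (S : Set F) ∈ nhds (0 : F) := by
      have hopen : IsOpen (QuotientAddGroup.mk '' Metric.ball (0:V) ε : Set (V ⧸ Λ)) :=
        QuotientAddGroup.isOpenMap_coe _ Metric.isOpen_ball
      have hball : QuotientAddGroup.mk '' Metric.ball (0:V) ε ∈ nhds (0 : V ⧸ Λ) :=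
        hopen.mem_nhds ⟨0, Metric.mem_ball_self hεpos, rfl⟩
      have hpre : (Subtype.val ⁻¹' (QuotientAddGroup.mk '' Metric.ball (0:V) ε) : Set F)
          ∈ nhds (0 : F) := continuous_subtype_val.continuousAt.preimage_mem_nhds hball
      refine Filter.mem_of_superset hpre ?_
      rintro x hx
      obtain ⟨v, hvball, hvx⟩ := hx
      have hxF : σbar (x : V ⧸ Λ) = x := (hF _).1 x.2
      have hsub : σ v - v ∈ Λ := by
        rw [← hvx, hσbar] at hxF
        exact (QuotientAddGroup.eq_iff_sub_mem).mp hxF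
      have hvnorm : ‖v‖ < ε := by simpa [dist_eq_norm] using hvball
      have hbound : ‖σ v - v‖ < ε₀ := by
        have h1 : ‖σ v - v‖ ≤ ‖σ v‖ + ‖v‖ := norm_sub_le _ _
        have h2 : ‖σ v‖ ≤ ‖σc‖ * ‖v‖ := σc.le_opNorm v
        have h3 : ‖σ v - v‖ ≤ (‖σc‖ + 1) * ‖v‖ := by nlinarith [norm_nonneg v]
        have h4 : (‖σc‖ + 1) * ‖v‖ < (‖σc‖ + 2) * ε := by
          have hc2 : (0:ℝ) < ‖σc‖ + 2 := by positivity
          nlinarith [norm_nonneg v, norm_nonneg σc, hεpos]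
        have h5 : (‖σc‖ + 2) * ε = ε₀ := by
          rw [hε]; field_simp
        linarith
      have hfix : σ v = v := sub_eq_zero.mp (hsep _ hsub hbound)
      exact ⟨v, hfix, hvx⟩
    have hSopen : IsOpen (S : Set F) := AddSubgroup.isOpen_of_mem_nhds S hnhds
    have hSclosed : IsClosed (S : Set F) := S.isClosed_of_isOpen hSopen
    have hcc : connectedComponent (0 : F) ⊆ (S : Set F) :=
      IsClopen.connectedComponent_subset ⟨hSclosed, hSopen⟩ S.zero_mem
    rintro y ⟨z, hz, rfl⟩
    exact hcc hz
  · -- H ⊆ F°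
    rintro x ⟨v, hv, rfl⟩
    have hmem : ∀ t : ℝ, ((QuotientAddGroup.mk (t • v) : V ⧸ Λ)) ∈ F := by
      intro t
      rw [hF, hσbar, map_smul, hv]
    set h : ℝ → F := fun t => ⟨QuotientAddGroup.mk (t • v), hmem t⟩ with hh
    have hcont : Continuous h := by
      apply Continuous.subtype_mk
      exact QuotientAddGroup.continuous_mk.comp (continuous_id.smul continuous_const)
    have h0 : h 0 = 0 := by
      apply Subtype.ext
      simp [hh]
    have hconn : IsConnected (Set.range h) := isConnected_range hcont
    have h1mem : h 1 ∈ connectedComponent (0 : F) := by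
      have := hconn.subset_connectedComponent (x := (0:F)) ⟨0, h0⟩
      exact this ⟨1, rfl⟩
    exact ⟨h 1, h1mem, by simp [hh]⟩
end

section
/- Let V be a finite-dimensional real vector space, let Λ ⊆ V be a full lattice, and let σ : V → V be an ℝ-linear involution with σ(Λ) = Λ. Let F be the fixed-point subgroup of the induced automorphism of the torus V/Λ. Then the component group π₀F = F/F° is a finite group in which every element g satisfies g² = 1, i.e., π₀F is a finite elementary Abelian 2-group. -/
/-- **The component group of the fixed locus of a torus involution is a finite
elementary abelian 2-group.** With `Λ` a full lattice in a finite-dimensional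
real vector space `V`, `σ` a linear involution of `V` preserving `Λ`, `σbar`
the induced automorphism of the torus `T = V/Λ`, and `F` its fixed-point
subgroup, the component group `π₀F = F/F°` is finite and every element `g`
satisfies `g + g = 0`. -/
theorem pi0_fixed_locus_finite_elementary_two_group
    (V : Type*) [NormedAddCommGroup V] [NormedSpace ℝ V] [FiniteDimensional ℝ V]
    (Λ : AddSubgroup V) [DiscreteTopology Λ]
    (hspan : Submodule.span ℝ (Λ : Set V) = ⊤)
    (σ : V →ₗ[ℝ] V) (hinv : σ ∘ₗ σ = LinearMap.id)
    (hσΛ : AddSubgroup.map σ.toAddMonoidHom Λ = Λ)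
    (σbar : V ⧸ Λ →+ V ⧸ Λ)
    (hσbar : ∀ v : V, σbar (QuotientAddGroup.mk v) = QuotientAddGroup.mk (σ v))
    (F : AddSubgroup (V ⧸ Λ)) (hF : ∀ x : V ⧸ Λ, x ∈ F ↔ σbar x = x) :
    Finite (↥F ⧸ AddSubgroup.connectedComponentOfZero ↥F) ∧
      ∀ g : ↥F ⧸ AddSubgroup.connectedComponentOfZero ↥F, g + g = 0 := by
  classical
  -- σ is an involution pointwise
  have hσσ : ∀ v : V, σ (σ v) = v := fun v => congrArg (fun f => f v) hinv
  -- σ maps Λ into Λ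
  have hσmem : ∀ v ∈ Λ, σ v ∈ Λ := by
    intro v hv
    rw [← hσΛ]
    exact ⟨v, hv, rfl⟩
  -- N = (σ - 1) Λ
  set τ : V →ₗ[ℝ] V := σ - LinearMap.id with hτ
  have hτ_apply : ∀ v : V, τ v = σ v - v := fun v => rfl
  set N : AddSubgroup V := AddSubgroup.map τ.toAddMonoidHom Λ with hN
  -- the map v ↦ (σ v - v) mod N
  set g : V →+ V ⧸ N := (QuotientAddGroup.mk' N).comp τ.toAddMonoidHom with hg
  have hgΛ : ∀ v ∈ Λ, g v = 0 := by
    intro v hv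
    have : τ v ∈ N := ⟨v, hv, rfl⟩
    simpa [g, QuotientAddGroup.eq_zero_iff] using this
  -- descend to the torus
  set Φ : V ⧸ Λ →+ V ⧸ N := QuotientAddGroup.lift Λ g (fun v hv => hgΛ v hv) with hΦ
  have hΦmk : ∀ v : V, Φ (QuotientAddGroup.mk v) = QuotientAddGroup.mk (σ v - v) := by
    intro v; rfl
  -- restrict to F
  set φ : ↥F →+ V ⧸ N := Φ.comp F.subtype with hφ
  -- For x ∈ F with lift v, σ v - v ∈ Λ
  have hlam : ∀ v : V, (QuotientAddGroup.mk v : V ⧸ Λ) ∈ F → σ v - v ∈ Λ := by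
    intro v hv
    have h1 : σbar (QuotientAddGroup.mk v) = QuotientAddGroup.mk v := (hF _).1 hv
    rw [hσbar] at h1
    have h2 : -(σ v) + v ∈ Λ := (QuotientAddGroup.eq).1 h1
    have := Λ.neg_mem h2
    simpa [neg_add_rev, sub_eq_add_neg, add_comm] using this
  -- σ(σ v - v) = -(σ v - v)
  have hσlam : ∀ v : V, σ (σ v - v) = -(σ v - v) := by
    intro v
    rw [map_sub, hσσ]
    abel
  -- twice any element of F lies in ker φ
  have h2tor : ∀ x : ↥F, φ x + φ x = 0 := by
    intro x
    obtain ⟨v, hv⟩ := QuotientAddGroup.mk_surjective (x : V ⧸ Λ)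
    have hvF : (QuotientAddGroup.mk v : V ⧸ Λ) ∈ F := hv ▸ x.2
    have hlamΛ : σ v - v ∈ Λ := hlam v hvF
    have key : (σ v - v) + (σ v - v) ∈ N := by
      have : τ (σ v - v) = -((σ v - v) + (σ v - v)) := by
        rw [hτ_apply, hσlam]; abel
      have hmem : τ (σ v - v) ∈ N := ⟨σ v - v, hlamΛ, rfl⟩
      rw [this] at hmem
      simpa using N.neg_mem hmem
    have : φ x = QuotientAddGroup.mk (σ v - v) := by
      simp only [φ, AddMonoidHom.comp_apply, AddSubgroup.coe_subtype, ← hv, hΦmk]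
    rw [this, ← QuotientAddGroup.mk_add, QuotientAddGroup.eq_zero_iff]
    exact key
  -- kernel of φ is contained in the connected component of 0
  have hker : ∀ x : ↥F, φ x = 0 → x ∈ AddSubgroup.connectedComponentOfZero ↥F := by
    intro x hx
    obtain ⟨v, hv⟩ := QuotientAddGroup.mk_surjective (x : V ⧸ Λ)
    have hφx : (QuotientAddGroup.mk (σ v - v) : V ⧸ N) = 0 := by
      rw [← hΦmk]
      have : Φ (x : V ⧸ Λ) = 0 := hx
      rw [← hv] at this
      exact this
    obtain ⟨μ, hμΛ, hμ⟩ : σ v - v ∈ N := (QuotientAddGroup.eq_zero_iff _).1 hφx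
    -- w := v - μ is a σ-fixed lift of x
    set w : V := v - μ with hw
    have hσw : σ w = w := by
      have : σ v - v = σ μ - μ := by rw [← hμ]; rfl
      have h2 : σ v - σ μ = v - μ := by
        have := sub_eq_sub_iff_sub_eq_sub.mp this
        linear_combination (norm := module) this
      rw [hw, map_sub, h2]
    have hmkw : (QuotientAddGroup.mk w : V ⧸ Λ) = (x : V ⧸ Λ) := by
      rw [← hv, QuotientAddGroup.eq]
      have : -w + v = μ := by rw [hw]; abel
      rw [this]; exact hμΛ
    -- the path t ↦ t • w
    have hmemF : ∀ t : ℝ, (QuotientAddGroup.mk (t • w) : V ⧸ Λ) ∈ F := by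
      intro t
      rw [hF, hσbar, map_smul, hσw]
    set f : ℝ → ↥F := fun t => ⟨QuotientAddGroup.mk (t • w), hmemF t⟩ with hf
    have hcont : Continuous f := by
      apply Continuous.subtype_mk
      exact continuous_quot_mk.comp (continuous_id.smul continuous_const)
    have hconn : IsPreconnected (Set.range f) := by
      rw [← Set.image_univ]
      exact isPreconnected_univ.image f hcont.continuousOn
    have h0 : (0 : ↥F) ∈ Set.range f := ⟨0, by ext; simp [f]⟩
    have hx1 : x ∈ Set.range f := ⟨1, by ext; simp [f, hmkw]⟩
    exact hconn.subset_connectedComponent h0 hx1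
  -- Finiteness of the range of φ
  have hrange_fin : Finite ↥φ.range := by
    -- the range, as a ℤ-submodule
    set R : Submodule ℤ (V ⧸ N) := AddSubgroup.toIntSubmodule φ.range with hR
    -- the lattice as a ℤ-submodule, and its image in V ⧸ N
    set L : Submodule ℤ V := AddSubgroup.toIntSubmodule Λ with hL
    haveI : DiscreteTopology L := ‹DiscreteTopology Λ›
    haveI : Module.Finite ℤ L := inferInstance
    set A : Submodule ℤ (V ⧸ N) := L.map (QuotientAddGroup.mk' N).toIntLinearMap with hA
    haveI : Module.Finite ℤ A := Module.Finite.map L _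
    haveI : IsNoetherian ℤ A := inferInstance
    have hRA : R ≤ A := by
      rintro y ⟨x, rfl⟩
      obtain ⟨v, hv⟩ := QuotientAddGroup.mk_surjective (x : V ⧸ Λ)
      have hvF : (QuotientAddGroup.mk v : V ⧸ Λ) ∈ F := hv ▸ x.2
      have : φ x = QuotientAddGroup.mk (σ v - v) := by
        simp only [φ, AddMonoidHom.comp_apply, AddSubgroup.coe_subtype, ← hv, hΦmk]
      rw [this]
      exact ⟨σ v - v, hlam v hvF, rfl⟩
    have hfg : (R.comap A.subtype).FG := IsNoetherian.noetherian _
    haveI : Module.Finite ℤ (R.comap A.subtype) := Module.Finite.iff_fg.mpr hfg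
    haveI : Module.Finite ℤ R :=
      Module.Finite.equiv (Submodule.comapSubtypeEquivOfLe hRA)
    have htor : Module.IsTorsion ℤ R := by
      intro y
      refine ⟨⟨2, mem_nonZeroDivisors_of_ne_zero (by norm_num)⟩, ?_⟩
      obtain ⟨x, hx⟩ := y.2
      have h0 : (y : V ⧸ N) + (y : V ⧸ N) = 0 := by rw [← hx]; exact h2tor x
      rw [Submonoid.smul_def]
      apply Subtype.ext
      simpa [two_zsmul] using h0
    exact Module.finite_of_fg_torsion R htor
  constructor
  · -- finiteness : F ⧸ F° is a quotient of F ⧸ ker φ ≃ range φ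
    have hle : φ.ker ≤ AddSubgroup.connectedComponentOfZero ↥F := fun x hx => hker x hx
    haveI : Finite (↥F ⧸ φ.ker) :=
      Finite.of_equiv _ (QuotientAddGroup.quotientKerEquivRange φ).toEquiv.symm
    have hsurj : Function.Surjective
        (QuotientAddGroup.map φ.ker (AddSubgroup.connectedComponentOfZero ↥F)
          (AddMonoidHom.id ↥F) hle) := by
      rintro ⟨x⟩
      exact ⟨QuotientAddGroup.mk x, rfl⟩
    exact Finite.of_surjective _ hsurj
  · -- 2-torsion
    intro gq
    obtain ⟨x, rfl⟩ := QuotientAddGroup.mk_surjective gq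
    rw [← QuotientAddGroup.mk_add, QuotientAddGroup.eq_zero_iff]
    exact hker (x + x) (by rw [map_add]; exact h2tor x)
end

section
/- Let A be a group (not necessarily abelian) equipped with a group automorphism σ : A → A satisfying σ ∘ σ = id, and suppose the squaring map a ↦ a² is a bijection of A onto itself. Then every 1-cocycle is a coboundary: for every z ∈ A with σ(z) = z⁻¹ there exists a ∈ A such that z = a · σ(a)⁻¹. -/
/-- **Triviality of first Galois cohomology for uniquely 2-divisible groups.**
Let `A` be a group with an involutive automorphism `σ` such that squaring is a
bijection of `A`. Then every 1-cocycle (an element `z` with `σ z = z⁻¹`) is a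
coboundary, i.e. of the form `a * (σ a)⁻¹`. -/
theorem every_cocycle_is_coboundary_of_squaring_bijective
    {A : Type*} [Group A] (σ : A →* A) (hσ : ∀ a : A, σ (σ a) = a)
    (hsq : Function.Bijective fun a : A => a ^ 2) :
    ∀ z : A, σ z = z⁻¹ → ∃ a : A, z = a * (σ a)⁻¹ := by
  intro z hz
  obtain ⟨a, ha⟩ := hsq.2 z
  simp only at ha
  have h1 : (σ a) ^ 2 = (a⁻¹) ^ 2 := by
    rw [← map_pow, ha, hz, ← ha, inv_pow]
  have h2 : σ a = a⁻¹ := hsq.1 h1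
  exact ⟨a, by rw [h2, inv_inv, ← sq, ha]⟩
end

section
/- Let ω ∈ ℂ with ω ∉ ℝ and −1/2 ≤ Re(ω) < 1/2. If the additive subgroup ℤ + ℤω of ℂ is stable under complex conjugation (i.e., the complex conjugate of every element of ℤ + ℤω again lies in ℤ + ℤω), then Re(ω) = 0 or Re(ω) = −1/2. -/
open Complex

/-- **Normalized real period lattices.** If `ω ∈ ℂ` is non-real with
`-1/2 ≤ Re ω < 1/2` and the lattice `ℤ + ℤω` is stable under complex
conjugation, then `Re ω = 0` or `Re ω = -1/2`. -/
theorem re_eq_zero_or_neg_half_of_conj_stable (ω : ℂ) (hω : ω.im ≠ 0)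
    (h₁ : -(1/2 : ℝ) ≤ ω.re) (h₂ : ω.re < 1/2)
    (hstab : ∀ z ∈ {z : ℂ | ∃ a b : ℤ, z = (a : ℂ) + (b : ℂ) * ω},
      (starRingEnd ℂ) z ∈ {z : ℂ | ∃ a b : ℤ, z = (a : ℂ) + (b : ℂ) * ω}) :
    ω.re = 0 ∨ ω.re = -(1/2 : ℝ) := by
  obtain ⟨a, b, hab⟩ := hstab ω ⟨0, 1, by simp⟩
  have him : -ω.im = (a : ℝ) * 0 + (b : ℝ) * ω.im := by
    have := congrArg Complex.im hab
    simpa using this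
  have hre : ω.re = (a : ℝ) + (b : ℝ) * ω.re := by
    have := congrArg Complex.re hab
    simpa using this
  have hb : (b : ℝ) = -1 := by
    have : ((b : ℝ) + 1) * ω.im = 0 := by ring_nf; linarith [him]
    rcases mul_eq_zero.1 this with h | h
    · linarith
    · exact absurd h hω
  have h2re : 2 * ω.re = (a : ℝ) := by rw [hb] at hre; linarith
  have ha : a = 0 ∨ a = -1 := by
    have h1 : (-1 : ℝ) ≤ (a : ℝ) := by linarith
    have h2' : (a : ℝ) < 1 := by linarith
    have : (-1 : ℤ) ≤ a ∧ a < 1 := ⟨by exact_mod_cast h1, by exact_mod_cast h2'⟩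
    omega
  rcases ha with h | h <;> [left; right] <;> rw [h] at h2re <;> push_cast at h2re <;> linarith
end

section
/- Let t > 0 be a real number and let Λ = ℤ + ℤ(it) ⊆ ℂ. Then the fixed-point subgroup F = {z + Λ ∈ ℂ/Λ : conj(z) + Λ = z + Λ} of the automorphism of the torus ℂ/Λ induced by complex conjugation has exactly two connected components. -/
open Complex

/-- **Real locus of an elliptic curve with purely imaginary period: two components.**
Let `t > 0`, let `Λ = ℤ + ℤ(it) ⊆ ℂ`, and let `c` be the automorphism of the torus
`ℂ/Λ` induced by complex conjugation. Then the fixed-point subgroup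
`F = {z + Λ : conj z + Λ = z + Λ}` of `c` has exactly two connected components. -/
theorem elliptic_imaginary_period_two_components (t : ℝ) (ht : 0 < t)
    (Λ : AddSubgroup ℂ)
    (hΛ : ∀ z : ℂ, z ∈ Λ ↔ ∃ m n : ℤ, z = (m : ℂ) + (n : ℂ) * ((t : ℂ) * Complex.I))
    (c : ℂ ⧸ Λ →+ ℂ ⧸ Λ)
    (hc : ∀ z : ℂ, c (QuotientAddGroup.mk z) = QuotientAddGroup.mk ((starRingEnd ℂ) z)) :
    Nat.card (ConnectedComponents {x : ℂ ⧸ Λ // c x = x}) = 2 := by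
  -- lattice membership via real and imaginary parts
  have hΛ' : ∀ z : ℂ, z ∈ Λ ↔ (∃ m : ℤ, z.re = m) ∧ (∃ n : ℤ, z.im = n * t) := by
    intro z
    constructor
    · intro hz
      obtain ⟨m, n, rfl⟩ := (hΛ z).mp hz
      exact ⟨⟨m, by simp⟩, ⟨n, by simp⟩⟩
    · rintro ⟨⟨m, hm⟩, ⟨n, hn⟩⟩
      exact (hΛ z).mpr ⟨m, n, by apply Complex.ext <;> simp [hm, hn]⟩
  -- the two candidate circles in the quotient
  set S0 : Set (ℂ ⧸ Λ) := {x | ∃ r : ℝ, x = ((r : ℂ) : ℂ ⧸ Λ)} with hS0def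
  set S1 : Set (ℂ ⧸ Λ) :=
    {x | ∃ r : ℝ, x = (((r : ℂ) + (t / 2 : ℝ) * Complex.I : ℂ) : ℂ ⧸ Λ)} with hS1def
  -- disjointness
  have hdisj : ∀ r s : ℝ,
      ((r : ℂ) : ℂ ⧸ Λ) ≠ (((s : ℂ) + (t / 2 : ℝ) * Complex.I : ℂ) : ℂ ⧸ Λ) := by
    intro r s h
    rw [QuotientAddGroup.eq] at h
    obtain ⟨-, n, hn⟩ := (hΛ' _).mp h
    simp at hn
    have h2 : (2 * n : ℤ) • t = (1 : ℤ) • t := by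
      simp only [zsmul_eq_mul]
      push_cast
      linarith
    have := smul_left_injective ℤ ht.ne' h2
    omega
  -- points of S0 and S1 are fixed
  have hfix0 : ∀ r : ℝ, c ((r : ℂ) : ℂ ⧸ Λ) = ((r : ℂ) : ℂ ⧸ Λ) := by
    intro r
    rw [hc, Complex.conj_ofReal]
  have hfix1 : ∀ r : ℝ,
      c ((((r : ℂ) + (t / 2 : ℝ) * Complex.I : ℂ)) : ℂ ⧸ Λ)
        = ((((r : ℂ) + (t / 2 : ℝ) * Complex.I : ℂ)) : ℂ ⧸ Λ) := by
    intro r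
    rw [hc]
    rw [QuotientAddGroup.eq]
    refine (hΛ' _).mpr ⟨⟨0, ?_⟩, ⟨1, ?_⟩⟩ <;>
      simp only [Complex.add_re, Complex.add_im, Complex.neg_re, Complex.neg_im,
        Complex.conj_re, Complex.conj_im, Complex.mul_re, Complex.mul_im,
        Complex.I_re, Complex.I_im, Complex.ofReal_re, Complex.ofReal_im] <;>
      push_cast <;> ring
  -- fixed points lie in S0 ∪ S1
  have hFS : ∀ x : ℂ ⧸ Λ, c x = x ↔ x ∈ S0 ∪ S1 := by
    intro x
    constructor
    · intro hx
      obtain ⟨z, rfl⟩ := QuotientAddGroup.mk_surjective x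
      rw [hc, QuotientAddGroup.eq] at hx
      obtain ⟨-, n, hn⟩ := (hΛ' _).mp hx
      simp at hn
      rcases Int.even_or_odd n with ⟨k, hk⟩ | ⟨k, hk⟩
      · left
        refine ⟨z.re, ?_⟩
        rw [QuotientAddGroup.eq]
        refine (hΛ' _).mpr ⟨⟨0, by simp⟩, ⟨-k, ?_⟩⟩
        subst hk
        simp only [Complex.add_im, Complex.neg_im, Complex.ofReal_im, Complex.mul_im,
          Complex.ofReal_re, Complex.I_im, Complex.I_re]
        push_cast at hn ⊢
        linarith
      · right
        refine ⟨z.re, ?_⟩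
        rw [QuotientAddGroup.eq]
        refine (hΛ' _).mpr ⟨⟨0, by simp⟩, ⟨-k, ?_⟩⟩
        subst hk
        simp only [Complex.add_im, Complex.neg_im, Complex.ofReal_im, Complex.mul_im,
          Complex.ofReal_re, Complex.I_im, Complex.I_re]
        push_cast at hn ⊢
        linarith
    · rintro (⟨r, rfl⟩ | ⟨r, rfl⟩)
      · exact hfix0 r
      · exact hfix1 r
  -- the two lines in ℝ of allowed imaginary parts are closed
  have hA0 : IsClosed {y : ℝ | ∃ n : ℤ, y = n * t} := by
    have : {y : ℝ | ∃ n : ℤ, y = n * t}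
        = (Homeomorph.mulRight₀ t ht.ne') '' (Set.range ((↑) : ℤ → ℝ)) := by
      ext y
      constructor
      · rintro ⟨n, rfl⟩
        exact ⟨(n : ℝ), ⟨n, rfl⟩, rfl⟩
      · rintro ⟨x, ⟨n, rfl⟩, rfl⟩
        exact ⟨n, rfl⟩
    rw [this]
    exact (Homeomorph.isClosedMap _) _ Int.isClosedEmbedding_coe_real.isClosed_range
  have hA1 : IsClosed {y : ℝ | ∃ n : ℤ, y = t / 2 + n * t} := by
    have : {y : ℝ | ∃ n : ℤ, y = t / 2 + n * t}
        = (Homeomorph.addLeft (t / 2)) '' {y : ℝ | ∃ n : ℤ, y = n * t} := by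
      ext y
      constructor
      · rintro ⟨n, rfl⟩
        exact ⟨n * t, ⟨n, rfl⟩, rfl⟩
      · rintro ⟨x, ⟨n, rfl⟩, rfl⟩
        exact ⟨n, rfl⟩
    rw [this]
    exact (Homeomorph.isClosedMap _) _ hA0
  -- preimages of S0 and S1 in ℂ
  have hp0 : (QuotientAddGroup.mk : ℂ → ℂ ⧸ Λ) ⁻¹' S0
      = Complex.im ⁻¹' {y : ℝ | ∃ n : ℤ, y = n * t} := by
    ext z
    constructor
    · rintro ⟨r, hr⟩
      rw [QuotientAddGroup.eq] at hr
      obtain ⟨-, n, hn⟩ := (hΛ' _).mp hr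
      simp at hn
      exact ⟨-n, by push_cast; linarith⟩
    · rintro ⟨n, hn⟩
      refine ⟨z.re, ?_⟩
      rw [QuotientAddGroup.eq]
      exact (hΛ' _).mpr ⟨⟨0, by simp⟩, ⟨-n, by simp [hn]⟩⟩
  have hp1 : (QuotientAddGroup.mk : ℂ → ℂ ⧸ Λ) ⁻¹' S1
      = Complex.im ⁻¹' {y : ℝ | ∃ n : ℤ, y = t / 2 + n * t} := by
    ext z
    constructor
    · rintro ⟨r, hr⟩
      rw [QuotientAddGroup.eq] at hr
      obtain ⟨-, n, hn⟩ := (hΛ' _).mp hr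
      simp at hn
      exact ⟨-n, by push_cast; linarith⟩
    · rintro ⟨n, hn⟩
      refine ⟨z.re, ?_⟩
      rw [QuotientAddGroup.eq]
      refine (hΛ' _).mpr ⟨⟨0, by simp⟩, ⟨-n, ?_⟩⟩
      simp only [Complex.add_im, Complex.neg_im, Complex.ofReal_im, Complex.mul_im,
        Complex.ofReal_re, Complex.I_im, Complex.I_re]
      push_cast
      rw [hn]
      ring
  have hcl0 : IsClosed S0 :=
    (QuotientAddGroup.isQuotientMap_mk Λ).isClosed_preimage.mp
      (by rw [hp0]; exact hA0.preimage Complex.continuous_im)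
  have hcl1 : IsClosed S1 :=
    (QuotientAddGroup.isQuotientMap_mk Λ).isClosed_preimage.mp
      (by rw [hp1]; exact hA1.preimage Complex.continuous_im)
  -- now work in the fixed-point subspace
  set F := {x : ℂ ⧸ Λ // c x = x} with hFdef
  set U : Set F := Subtype.val ⁻¹' S0 with hUdef
  have hcompl : Uᶜ = Subtype.val ⁻¹' S1 := by
    ext x
    simp only [Set.mem_compl_iff, hUdef, Set.mem_preimage]
    constructor
    · intro hx
      rcases (hFS x.1).mp x.2 with h | h
      · exact absurd h hx
      · exact h
    · rintro ⟨s, hs⟩ ⟨r, hr⟩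
      exact hdisj r s (hr ▸ hs ▸ rfl)
  have hclopen : IsClopen U := by
    refine ⟨hcl0.preimage continuous_subtype_val, ?_⟩
    rw [← isClosed_compl_iff, hcompl]
    exact hcl1.preimage continuous_subtype_val
  have hfcont : Continuous U.boolIndicator :=
    (continuous_boolIndicator_iff_isClopen U).mpr hclopen
  -- parametrizations of the two circles
  have hφ0 : Continuous (fun r : ℝ => (⟨((r : ℂ) : ℂ ⧸ Λ), hfix0 r⟩ : F)) :=
    Continuous.subtype_mk (QuotientAddGroup.continuous_mk.comp continuous_ofReal) _
  have hφ1 : Continuous (fun r : ℝ =>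
      (⟨(((r : ℂ) + (t / 2 : ℝ) * Complex.I : ℂ) : ℂ ⧸ Λ), hfix1 r⟩ : F)) :=
    Continuous.subtype_mk (QuotientAddGroup.continuous_mk.comp
      (Complex.continuous_ofReal.add continuous_const)) _
  have hR0 : IsPreconnected (Set.range fun r : ℝ => (⟨((r : ℂ) : ℂ ⧸ Λ), hfix0 r⟩ : F)) :=
    (isPreconnected_range hφ0)
  have hR1 : IsPreconnected (Set.range fun r : ℝ =>
      (⟨(((r : ℂ) + (t / 2 : ℝ) * Complex.I : ℂ) : ℂ ⧸ Λ), hfix1 r⟩ : F)) :=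
    (isPreconnected_range hφ1)
  -- the lifted map to Bool
  have hbij : Function.Bijective hfcont.connectedComponentsLift := by
    constructor
    · intro a b hab
      obtain ⟨x, rfl⟩ := ConnectedComponents.surjective_coe a
      obtain ⟨y, rfl⟩ := ConnectedComponents.surjective_coe b
      rw [hfcont.connectedComponentsLift_apply_coe,
        hfcont.connectedComponentsLift_apply_coe] at hab
      rw [ConnectedComponents.coe_eq_coe]
      by_cases hx : x ∈ U
      · have hy : y ∈ U := by
          rw [U.mem_iff_boolIndicator] at hx ⊢
          rw [← hab]; exact hx
        obtain ⟨r, hr⟩ := hx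
        obtain ⟨s, hs⟩ := hy
        have hxm : x ∈ Set.range fun r : ℝ => (⟨((r : ℂ) : ℂ ⧸ Λ), hfix0 r⟩ : F) :=
          ⟨r, Subtype.ext hr.symm⟩
        have hym : y ∈ Set.range fun r : ℝ => (⟨((r : ℂ) : ℂ ⧸ Λ), hfix0 r⟩ : F) :=
          ⟨s, Subtype.ext hs.symm⟩
        have h1 := hR0.subset_connectedComponent hxm
        exact connectedComponent_eq (h1 hym)
      · have hy : y ∉ U := by
          rw [U.notMem_iff_boolIndicator] at hx ⊢
          rw [← hab]; exact hx
        rw [← Set.mem_compl_iff, hcompl] at hx hy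
        obtain ⟨r, hr⟩ := hx
        obtain ⟨s, hs⟩ := hy
        have hxm : x ∈ Set.range fun r : ℝ =>
            (⟨(((r : ℂ) + (t / 2 : ℝ) * Complex.I : ℂ) : ℂ ⧸ Λ), hfix1 r⟩ : F) :=
          ⟨r, Subtype.ext hr.symm⟩
        have hym : y ∈ Set.range fun r : ℝ =>
            (⟨(((r : ℂ) + (t / 2 : ℝ) * Complex.I : ℂ) : ℂ ⧸ Λ), hfix1 r⟩ : F) :=
          ⟨s, Subtype.ext hs.symm⟩
        have h1 := hR1.subset_connectedComponent hxm
        exact connectedComponent_eq (h1 hym)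
    · intro b
      cases b
      · refine ⟨((⟨(((0 : ℝ) : ℂ) + (t / 2 : ℝ) * Complex.I : ℂ), hfix1 0⟩ : F) :
          ConnectedComponents F), ?_⟩
        rw [hfcont.connectedComponentsLift_apply_coe]
        rw [← U.notMem_iff_boolIndicator]
        rintro ⟨r, hr⟩
        exact hdisj r 0 (by rw [← hr])
      · refine ⟨((⟨(((0 : ℝ) : ℂ) : ℂ ⧸ Λ), hfix0 0⟩ : F) : ConnectedComponents F), ?_⟩
        rw [hfcont.connectedComponentsLift_apply_coe]
        rw [← U.mem_iff_boolIndicator]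
        exact ⟨0, rfl⟩
  rw [Nat.card_congr (Equiv.ofBijective _ hbij)]
  simp
end

section
/- Let t > 0 be a real number and let Λ = ℤ + ℤ(−1/2 + it) ⊆ ℂ. Then the fixed-point subgroup F = {z + Λ ∈ ℂ/Λ : conj(z) + Λ = z + Λ} of the automorphism of the torus ℂ/Λ induced by complex conjugation is connected. -/
open Complex

/-- **Real locus of an elliptic curve with period `-1/2 + it`: connectedness.**
Let `t > 0`, let `Λ = ℤ + ℤ(-1/2 + it) ⊆ ℂ`, and let `c` be the automorphism of
the torus `ℂ/Λ` induced by complex conjugation. Then the fixed-point subgroup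
`F = {z + Λ : conj z + Λ = z + Λ}` of `c` is connected. -/
theorem elliptic_half_period_connected (t : ℝ) (ht : 0 < t)
    (Λ : AddSubgroup ℂ)
    (hΛ : ∀ z : ℂ, z ∈ Λ ↔
      ∃ m n : ℤ, z = (m : ℂ) + (n : ℂ) * (-(1/2 : ℂ) + (t : ℂ) * Complex.I))
    (c : ℂ ⧸ Λ →+ ℂ ⧸ Λ)
    (hc : ∀ z : ℂ, c (QuotientAddGroup.mk z) = QuotientAddGroup.mk ((starRingEnd ℂ) z)) :
    IsConnected {x : ℂ ⧸ Λ | c x = x} := by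
  have hset : {x : ℂ ⧸ Λ | c x = x}
      = (fun r : ℝ => (QuotientAddGroup.mk (r : ℂ) : ℂ ⧸ Λ)) '' Set.univ := by
    ext x
    simp only [Set.mem_setOf_eq, Set.image_univ, Set.mem_range]
    constructor
    · intro hx
      obtain ⟨z, rfl⟩ := QuotientAddGroup.mk_surjective x
      rw [hc] at hx
      have hmem : (starRingEnd ℂ) z - z ∈ Λ := (QuotientAddGroup.eq_iff_sub_mem).1 hx
      obtain ⟨m, n, hmn⟩ := (hΛ _).1 hmem
      -- compare real and imaginary parts
      have hre : (0 : ℝ) = (m : ℝ) + (n : ℝ) * (-(1/2)) := by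
        have := congrArg Complex.re hmn
        simpa using this
      have him : (-2 : ℝ) * z.im = (n : ℝ) * t := by
        have := congrArg Complex.im hmn
        simp [Complex.conj_im] at this
        linarith
      have hn : (n : ℝ) = 2 * m := by linarith
      have hzim : z.im = -(m : ℝ) * t := by
        have : (-2 : ℝ) * z.im = 2 * m * t := by rw [him, hn]
        linarith
      -- z + m * (-(1/2) + t*I) is real
      set w : ℂ := z + (m : ℂ) * (-(1/2 : ℂ) + (t : ℂ) * Complex.I) with hw
      have hwim : w.im = 0 := by
        simp [hw, Complex.add_im, Complex.mul_im, hzim]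
      have hweq : ((w.re : ℂ)) = w := by
        apply Complex.ext <;> simp [hwim]
      refine ⟨w.re, ?_⟩
      rw [QuotientAddGroup.eq_iff_sub_mem, hweq]
      have : w - z ∈ Λ := by
        rw [hΛ]
        exact ⟨0, m, by simp [hw]⟩
      simpa using this
    · rintro ⟨r, rfl⟩
      rw [hc]
      simp
  rw [hset]
  apply IsConnected.image isConnected_univ
  exact Continuous.continuousOn (QuotientAddGroup.continuous_mk.comp Complex.continuous_ofReal)
end

section
/- The sum S = ∑ over pairs (m,n) ∈ ℤ × ℤ with (m,n) ≠ (0,0) of (m + n·i)⁻⁴ (where i is the imaginary unit in ℂ) is a positive real number: Im(S) = 0 and Re(S) > 0. -/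
open Complex

noncomputable section GaussEisensteinAux

private def gsE (m : ℤ) : ℝ := ((m : ℝ) ^ 2 + 1)⁻¹

private lemma gsE_nonneg (m : ℤ) : 0 ≤ gsE m := by unfold gsE; positivity

private lemma sumN_gsE : Summable (fun n : ℕ => ((n : ℝ) ^ 2 + 1)⁻¹) := by
  have hs : Summable (fun n : ℕ => 2 * (1 / ((n + 1 : ℕ) : ℝ) ^ 2)) := by
    have h0 : Summable (fun n : ℕ => 1 / ((n : ℕ) : ℝ) ^ 2) :=
      (Real.summable_one_div_nat_pow (p := 2)).mpr one_lt_two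
    exact ((summable_nat_add_iff 1).mpr h0).mul_left 2
  refine Summable.of_nonneg_of_le (fun n => by positivity) (fun n => ?_) hs
  have h1 : (0:ℝ) < (n:ℝ)^2 + 1 := by positivity
  have h2 : (0:ℝ) < ((n+1:ℕ):ℝ)^2 := by positivity
  rw [inv_eq_one_div, mul_one_div, div_le_div_iff₀ h1 h2]
  push_cast
  nlinarith [sq_nonneg ((n:ℝ) - 1)]

private lemma sum_gsE : Summable gsE := by
  refine Summable.of_nat_of_neg ?_ ?_ <;>
    · refine sumN_gsE.congr fun n => ?_
      simp [gsE]

private lemma tsum_le_inv (k : ℕ) (hk : 0 < k) {f : ℕ → ℝ} (h0 : ∀ n, 0 ≤ f n)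
    (hle : ∀ n, f n ≤ (((n:ℝ) + k) * ((n:ℝ) + k + 1))⁻¹) : ∑' n, f n ≤ (k:ℝ)⁻¹ := by
  apply Real.tsum_le_of_sum_range_le h0
  intro N
  have hkR : (0:ℝ) < k := by exact_mod_cast hk
  have key : ∑ i ∈ Finset.range N,
      ((fun j : ℕ => ((j:ℝ) + k)⁻¹) i - (fun j : ℕ => ((j:ℝ) + k)⁻¹) (i+1))
      = ((0:ℝ) + k)⁻¹ - ((N:ℝ) + k)⁻¹ := by
    rw [Finset.sum_range_sub' (fun j : ℕ => ((j:ℝ) + k)⁻¹) N]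
    norm_num
  calc ∑ i ∈ Finset.range N, f i
      ≤ ∑ i ∈ Finset.range N,
        ((fun j : ℕ => ((j:ℝ) + k)⁻¹) i - (fun j : ℕ => ((j:ℝ) + k)⁻¹) (i+1)) := by
        refine Finset.sum_le_sum fun i _ => ?_
        have hx : (0:ℝ) < (i:ℝ) + k := by positivity
        have hx1 : (0:ℝ) < (i:ℝ) + k + 1 := by positivity
        refine le_trans (hle i) (le_of_eq ?_)
        simp only []
        have hc : ((i+1:ℕ):ℝ) = (i:ℝ) + 1 := by push_cast; ring
        rw [inv_eq_one_div, inv_eq_one_div, inv_eq_one_div, hc,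
          div_sub_div _ _ (ne_of_gt hx) (by linarith),
          div_eq_div_iff (by positivity) (by positivity)]
        ring
    _ = ((0:ℝ) + k)⁻¹ - ((N:ℝ) + k)⁻¹ := key
    _ ≤ (k:ℝ)⁻¹ := by
        have : (0:ℝ) ≤ ((N:ℝ) + k)⁻¹ := by positivity
        rw [zero_add]
        linarith

private def fN (n : ℕ) : ℝ := if 5 < n then ((n:ℝ)^2+1)⁻¹ else 0

private lemma fN_nonneg (n : ℕ) : 0 ≤ fN n := by
  unfold fN; split_ifs <;> positivity

private lemma sum_fN : Summable fN := by
  refine Summable.of_nonneg_of_le fN_nonneg (fun n => ?_) sumN_gsE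
  unfold fN; split_ifs
  · exact le_refl _
  · positivity

private lemma tsum_fN_le : ∑' n : ℕ, fN n ≤ 1/5 := by
  rw [← Summable.sum_add_tsum_nat_add 6 sum_fN]
  have h0 : ∑ i ∈ Finset.range 6, fN i = 0 := by
    simp [Finset.sum_range_succ, fN]
  rw [h0, zero_add]
  have h5 : ((5:ℕ):ℝ)⁻¹ = 1/5 := by norm_num
  rw [← h5]
  refine tsum_le_inv 5 (by norm_num) (fun n => by unfold fN; split_ifs <;> positivity)
    (fun n => ?_)
  have hpos : (0:ℝ) < ((n:ℝ) + 5) * ((n:ℝ) + 5 + 1) := by positivity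
  have : fN (n + 6) = (((n:ℝ)+6)^2+1)⁻¹ := by
    unfold fN
    rw [if_pos (by omega)]
    push_cast
    ring_nf
  rw [this]
  apply inv_anti₀ hpos
  push_cast
  nlinarith [sq_nonneg ((n:ℝ))]

private lemma tsum_fN_shift : ∑' n : ℕ, fN (n + 1) ≤ 1/5 := by
  have h := Summable.sum_add_tsum_nat_add 1 sum_fN
  have h0 : ∑ i ∈ Finset.range 1, fN i = 0 := by simp [fN]
  rw [h0, zero_add] at h
  rw [h]; exact tsum_fN_le

private def g1 (m : ℤ) : ℝ := if 5 < |m| then gsE m else 0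

private lemma g1_nonneg (m : ℤ) : 0 ≤ g1 m := by
  unfold g1; split_ifs; exacts [gsE_nonneg m, le_refl 0]

private lemma g1_le (m : ℤ) : g1 m ≤ gsE m := by
  unfold g1; split_ifs; exacts [le_refl _, gsE_nonneg m]

private lemma sum_g1 : Summable g1 :=
  Summable.of_nonneg_of_le g1_nonneg g1_le sum_gsE

private lemma g1_nat (n : ℕ) : g1 (n : ℤ) = fN n := by
  have habs : |(n:ℤ)| = (n:ℤ) := abs_of_nonneg (Int.natCast_nonneg n)
  by_cases h : 5 < n
  · have h' : (5:ℤ) < |(n:ℤ)| := by rw [habs]; exact_mod_cast h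
    simp [g1, fN, gsE, h, h']
  · have h' : ¬ (5:ℤ) < |(n:ℤ)| := by rw [habs]; exact_mod_cast h
    simp [g1, fN, h, h']

private lemma g1_neg (n : ℕ) : g1 (-((n:ℤ) + 1)) = fN (n + 1) := by
  have habs : |(-((n:ℤ) + 1))| = (n:ℤ) + 1 := by
    rw [abs_neg]; exact abs_of_nonneg (by positivity)
  by_cases h : 5 < n + 1
  · have h' : (5:ℤ) < |(-((n:ℤ) + 1))| := by rw [habs]; exact_mod_cast h
    rw [g1, fN, if_pos h, if_pos h']
    unfold gsE
    push_cast
    ring_nf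
  · have h' : ¬ (5:ℤ) < |(-((n:ℤ) + 1))| := by rw [habs]; exact_mod_cast h
    rw [g1, fN, if_neg h, if_neg h']

private lemma tsum_g1_le : ∑' m : ℤ, g1 m ≤ 2/5 := by
  have hA : Summable fun n : ℕ => g1 (n : ℤ) := sum_fN.congr (fun n => (g1_nat n).symm)
  have hB : Summable fun n : ℕ => g1 (-((n:ℤ) + 1)) := by
    refine ((summable_nat_add_iff 1).mpr sum_fN).congr (fun n => ?_)
    exact (g1_neg n).symm
  rw [tsum_of_nat_of_neg_add_one hA hB]
  have e1 : ∑' n : ℕ, g1 (n : ℤ) = ∑' n : ℕ, fN n := tsum_congr g1_nat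
  have e2 : ∑' n : ℕ, g1 (-((n:ℤ) + 1)) = ∑' n : ℕ, fN (n + 1) := tsum_congr g1_neg
  rw [e1, e2]
  linarith [tsum_fN_le, tsum_fN_shift]

private lemma tsum_shiftN (k : ℕ) (hk : 0 < k) :
    ∑' n : ℕ, (((n + (k+1) : ℕ):ℝ)^2+1)⁻¹ ≤ (k:ℝ)⁻¹ := by
  refine tsum_le_inv k hk (fun n => by positivity) (fun n => ?_)
  have hpos : (0:ℝ) < ((n:ℝ) + k) * ((n:ℝ) + k + 1) := by positivity
  apply inv_anti₀ hpos
  push_cast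
  have hk1 : (1:ℝ) ≤ (k:ℝ) := by exact_mod_cast hk
  have hn : (0:ℝ) ≤ (n:ℝ) := Nat.cast_nonneg n
  nlinarith [sq_nonneg ((n:ℝ))]

private lemma tsum_gsE_shift : ∑' n : ℕ, (((n+1:ℕ):ℝ)^2+1)⁻¹ ≤ 6/5 := by
  have hs : Summable (fun n : ℕ => (((n+1:ℕ):ℝ)^2+1)⁻¹) :=
    (summable_nat_add_iff 1).mpr sumN_gsE
  rw [← Summable.sum_add_tsum_nat_add 2 hs]
  have h0 : ∑ i ∈ Finset.range 2, (((i+1:ℕ):ℝ)^2+1)⁻¹ = 1/2 + 1/5 := by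
    norm_num [Finset.sum_range_succ]
  rw [h0]
  have he : ∑' n : ℕ, (((n+2+1:ℕ):ℝ)^2+1)⁻¹ = ∑' n : ℕ, (((n+(2+1):ℕ):ℝ)^2+1)⁻¹ := by
    apply tsum_congr; intro n; norm_num [add_assoc]
  have ht := tsum_shiftN 2 (by norm_num)
  rw [he]
  calc 1/2 + 1/5 + ∑' n : ℕ, (((n+(2+1):ℕ):ℝ)^2+1)⁻¹ ≤ 1/2 + 1/5 + ((2:ℕ):ℝ)⁻¹ := by
        linarith [ht]
    _ ≤ 6/5 := by norm_num

private lemma tsum_gsE_le : ∑' m : ℤ, gsE m ≤ 17/5 := by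
  have hA : Summable fun n : ℕ => gsE (n:ℤ) :=
    sumN_gsE.congr (fun n => by simp [gsE])
  have hB : Summable fun n : ℕ => gsE (-((n:ℤ)+1)) := by
    refine ((summable_nat_add_iff 1).mpr sumN_gsE).congr (fun n => ?_)
    unfold gsE; push_cast; ring_nf
  rw [tsum_of_nat_of_neg_add_one hA hB]
  have eA : ∑' n : ℕ, gsE (n:ℤ) = ∑' n : ℕ, ((n:ℝ)^2+1)⁻¹ :=
    tsum_congr (fun n => by simp [gsE])
  have eB : ∑' n : ℕ, gsE (-((n:ℤ)+1)) = ∑' n : ℕ, (((n+1:ℕ):ℝ)^2+1)⁻¹ :=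
    tsum_congr (fun n => by unfold gsE; push_cast; ring_nf)
  have hAval : ∑' n : ℕ, ((n:ℝ)^2+1)⁻¹ ≤ 1 + 6/5 := by
    rw [← Summable.sum_add_tsum_nat_add 1 sumN_gsE]
    have h0 : ∑ i ∈ Finset.range 1, ((i:ℝ)^2+1)⁻¹ = 1 := by
      norm_num
    rw [h0]
    linarith [tsum_gsE_shift]
  rw [eA, eB]
  linarith [tsum_gsE_shift, hAval]

private lemma int_sq_ge {m : ℤ} (hm : m ≠ 0) : 1 ≤ m^2 := by
  rcases lt_or_gt_of_ne hm with h | h <;> nlinarith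

private lemma int_sq_ge' {m : ℤ} (hm : 5 < |m|) : 36 ≤ m^2 := by
  rcases lt_abs.mp hm with h | h <;> nlinarith

private lemma real_ineq1 {a b : ℝ} (ha : a = 0 ∨ 1 ≤ a^2) (hb : b = 0 ∨ 1 ≤ b^2)
    (h : 1 ≤ a^2+b^2) :
    ((a^2+b^2)^2)⁻¹ ≤ 2*((a^2+1)⁻¹*(b^2+1)⁻¹) := by
  have hA : (0:ℝ) < a^2+1 := by positivity
  have hB : (0:ℝ) < b^2+1 := by positivity
  have hS : (0:ℝ) < (a^2+b^2)^2 := by nlinarith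
  rw [← mul_inv, inv_eq_one_div, inv_eq_one_div, mul_one_div,
    div_le_div_iff₀ hS (by positivity)]
  rcases ha with ha | ha <;> rcases hb with hb | hb <;>
    [skip; skip; skip; skip]
  · exfalso; rw [ha, hb] at h; norm_num at h
  · rw [ha]; nlinarith [sq_nonneg b]
  · rw [hb]; nlinarith [sq_nonneg a]
  · nlinarith [mul_le_mul ha hb (by norm_num) (sq_nonneg a), sq_nonneg (a-b), sq_nonneg (a+b)]

private lemma real_ineq2 {a b : ℝ} (h : 2 ≤ a^2+b^2) :
    ((a^2+b^2)^2)⁻¹ ≤ (a^2+1)⁻¹*(b^2+1)⁻¹ := by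
  have hA : (0:ℝ) < a^2+1 := by positivity
  have hB : (0:ℝ) < b^2+1 := by positivity
  have hS : (0:ℝ) < (a^2+b^2)^2 := by nlinarith
  rw [← mul_inv, inv_eq_one_div, inv_eq_one_div, div_le_div_iff₀ hS (by positivity)]
  nlinarith [sq_nonneg (a*b), sq_nonneg (a^2-b^2), sq_nonneg (a^2+b^2-2)]

private def Fc (q : ℤ × ℤ) : ℂ := ((q.1 : ℂ) + (q.2 : ℂ) * Complex.I) ^ (-4 : ℤ)

private lemma Fc_zero : Fc 0 = 0 := by
  unfold Fc
  norm_num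

private lemma norm_Fc (q : ℤ × ℤ) : ‖Fc q‖ = (((q.1:ℝ)^2+(q.2:ℝ)^2)^2)⁻¹ := by
  obtain ⟨m, n⟩ := q
  unfold Fc
  rw [norm_zpow]
  have habs : ‖(m:ℂ) + (n:ℂ) * Complex.I‖^2 = (m:ℝ)^2+(n:ℝ)^2 := by
    rw [Complex.sq_norm, Complex.normSq_apply]
    simp
    ring
  rw [zpow_neg, show ((4:ℤ)) = ((4:ℕ):ℤ) by norm_num, zpow_natCast]
  rw [show (‖(m:ℂ) + (n:ℂ) * Complex.I‖)^(4:ℕ) = (‖(m:ℂ) + (n:ℂ) * Complex.I‖^2)^2 by ring,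
    habs]

private lemma normFc_le_two (q : ℤ × ℤ) : ‖Fc q‖ ≤ 2 * (gsE q.1 * gsE q.2) := by
  by_cases hq : q = 0
  · rw [hq, Fc_zero]
    simp only [norm_zero]
    have := gsE_nonneg (0:ℤ)
    positivity
  · rw [norm_Fc]
    have h1 : (1:ℝ) ≤ (q.1:ℝ)^2 + (q.2:ℝ)^2 := by
      have : (1:ℤ) ≤ q.1^2 + q.2^2 := by
        by_cases h1 : q.1 = 0
        · have h2 : q.2 ≠ 0 := fun h2 => hq (Prod.ext h1 h2)
          nlinarith [int_sq_ge h2, sq_nonneg q.1]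
        · nlinarith [int_sq_ge h1, sq_nonneg q.2]
      exact_mod_cast this
    have ha : (q.1:ℝ) = 0 ∨ 1 ≤ (q.1:ℝ)^2 := by
      by_cases h1 : q.1 = 0
      · left; exact_mod_cast congrArg (Int.cast : ℤ → ℝ) h1
      · right; exact_mod_cast int_sq_ge h1
    have hb : (q.2:ℝ) = 0 ∨ 1 ≤ (q.2:ℝ)^2 := by
      by_cases h2 : q.2 = 0
      · left; exact_mod_cast congrArg (Int.cast : ℤ → ℝ) h2
      · right; exact_mod_cast int_sq_ge h2
    exact real_ineq1 ha hb h1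

private lemma normFc_le (q : ℤ × ℤ) (hq : 5 < |q.1| ∨ 5 < |q.2|) :
    ‖Fc q‖ ≤ gsE q.1 * gsE q.2 := by
  rw [norm_Fc]
  have h2 : (2:ℝ) ≤ (q.1:ℝ)^2 + (q.2:ℝ)^2 := by
    have : (2:ℤ) ≤ q.1^2 + q.2^2 := by
      rcases hq with h | h
      · nlinarith [int_sq_ge' h, sq_nonneg q.2]
      · nlinarith [int_sq_ge' h, sq_nonneg q.1]
    exact_mod_cast this
  exact real_ineq2 h2

private lemma Fc_re (q : ℤ × ℤ) : (Fc q).re =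
    ((q.1:ℝ)^4 - 6*(q.1:ℝ)^2*(q.2:ℝ)^2 + (q.2:ℝ)^4) / ((q.1:ℝ)^2+(q.2:ℝ)^2)^4 := by
  obtain ⟨m, n⟩ := q
  by_cases h0 : ((m:ℂ) + (n:ℂ) * Complex.I) = 0
  · have hm : (m:ℝ) = 0 := by
      have := congrArg Complex.re h0; simpa using this
    have hn : (n:ℝ) = 0 := by
      have := congrArg Complex.im h0; simpa using this
    unfold Fc
    simp only [h0]
    rw [zero_zpow _ (by norm_num)]
    simp [hm, hn]
  · have h4 : Fc (m, n) = (((m:ℂ) + (n:ℂ) * Complex.I)^(4:ℕ))⁻¹ := by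
      unfold Fc
      rw [zpow_neg, show ((4:ℤ)) = ((4:ℕ):ℤ) by norm_num, zpow_natCast]
    rw [h4, Complex.inv_re]
    have hre : ((m:ℂ) + (n:ℂ) * Complex.I).re = (m:ℝ) := by simp
    have him : ((m:ℂ) + (n:ℂ) * Complex.I).im = (n:ℝ) := by simp
    have h5 : (((m:ℂ) + (n:ℂ) * Complex.I)^(4:ℕ)).re
        = (m:ℝ)^4 - 6*(m:ℝ)^2*(n:ℝ)^2 + (n:ℝ)^4 := by
      simp only [pow_succ, pow_zero, one_mul, Complex.mul_re, Complex.mul_im, hre, him]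
      ring
    have h6 : Complex.normSq (((m:ℂ) + (n:ℂ) * Complex.I)^(4:ℕ))
        = ((m:ℝ)^2+(n:ℝ)^2)^4 := by
      rw [map_pow, Complex.normSq_apply, hre, him]
      ring
    rw [h5, h6]

private lemma sum_h : Summable (fun q : ℤ × ℤ => gsE q.1 * gsE q.2) :=
  sum_gsE.mul_of_nonneg sum_gsE gsE_nonneg gsE_nonneg

private lemma sum_G : Summable (fun q : ℤ × ℤ => ‖Fc q‖) :=
  Summable.of_nonneg_of_le (fun q => norm_nonneg _) normFc_le_two (sum_h.mul_left 2)

private lemma sum_Fc : Summable Fc := sum_G.of_norm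

private lemma sum_R : Summable (fun q : ℤ × ℤ => (Fc q).re) := by
  refine Summable.of_norm_bounded sum_G (fun q => ?_)
  rw [Real.norm_eq_abs]
  exact Complex.abs_re_le_norm _

private lemma Fc_conj (q : ℤ × ℤ) : Fc (q.1, -q.2) = (starRingEnd ℂ) (Fc q) := by
  unfold Fc
  rw [map_zpow₀]
  congr 1
  apply Complex.ext <;> simp

private def wB (q : ℤ × ℤ) : ℝ := g1 q.1 * gsE q.2 + gsE q.1 * g1 q.2

private lemma wB_nonneg (q : ℤ × ℤ) : 0 ≤ wB q :=
  add_nonneg (mul_nonneg (g1_nonneg _) (gsE_nonneg _))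
    (mul_nonneg (gsE_nonneg _) (g1_nonneg _))

private lemma sum_s1 : Summable (fun q : ℤ × ℤ => g1 q.1 * gsE q.2) :=
  sum_g1.mul_of_nonneg sum_gsE g1_nonneg gsE_nonneg

private lemma sum_s2 : Summable (fun q : ℤ × ℤ => gsE q.1 * g1 q.2) :=
  sum_gsE.mul_of_nonneg sum_g1 gsE_nonneg g1_nonneg

private lemma sum_wB : Summable wB := sum_s1.add sum_s2

private lemma tsum_prod_le (u v : ℤ → ℝ) (hu : Summable u) (hv : Summable v)
    (hu0 : ∀ m, 0 ≤ u m) (hv0 : ∀ m, 0 ≤ v m) (huv : Summable (fun q : ℤ × ℤ => u q.1 * v q.2))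
    {A B : ℝ} (hA : ∑' m, u m ≤ A) (hB : ∑' m, v m ≤ B) (hB0 : 0 ≤ B) :
    ∑' q : ℤ × ℤ, u q.1 * v q.2 ≤ A * B := by
  have h1 : ∀ b : ℤ, Summable fun c : ℤ => u b * v c := fun b => hv.mul_left _
  rw [Summable.tsum_prod' huv h1]
  have e1 : ∀ b : ℤ, ∑' c, u b * v c = u b * ∑' c, v c := fun b => tsum_mul_left
  rw [tsum_congr e1, tsum_mul_right]
  have h0A : 0 ≤ ∑' m, u m := tsum_nonneg hu0
  have h0B : 0 ≤ ∑' m, v m := tsum_nonneg hv0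
  exact mul_le_mul hA hB h0B (le_trans h0A hA)

private lemma tsum_wB_le : ∑' q : ℤ × ℤ, wB q ≤ 68/25 := by
  rw [show wB = fun q : ℤ × ℤ => g1 q.1 * gsE q.2 + gsE q.1 * g1 q.2 from rfl,
    Summable.tsum_add sum_s1 sum_s2]
  have h1 : ∑' q : ℤ × ℤ, g1 q.1 * gsE q.2 ≤ (2/5) * (17/5) :=
    tsum_prod_le g1 gsE sum_g1 sum_gsE g1_nonneg gsE_nonneg sum_s1
      tsum_g1_le tsum_gsE_le (by norm_num)
  have h2 : ∑' q : ℤ × ℤ, gsE q.1 * g1 q.2 ≤ (17/5) * (2/5) :=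
    tsum_prod_le gsE g1 sum_gsE sum_g1 gsE_nonneg g1_nonneg sum_s2
      tsum_gsE_le tsum_g1_le (by norm_num)
  linarith

private def boxS : Finset (ℤ × ℤ) := Finset.Icc (-5:ℤ) 5 ×ˢ Finset.Icc (-5:ℤ) 5

private lemma not_mem_boxS {q : ℤ × ℤ} (hq : q ∉ boxS) : 5 < |q.1| ∨ 5 < |q.2| := by
  by_contra hc
  push_neg at hc
  obtain ⟨h1, h2⟩ := hc
  exact hq (Finset.mem_product.mpr
    ⟨Finset.mem_Icc.mpr (abs_le.mp h1), Finset.mem_Icc.mpr (abs_le.mp h2)⟩)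

private lemma G_le_wB {q : ℤ × ℤ} (hq : q ∉ boxS) : ‖Fc q‖ ≤ wB q := by
  rcases not_mem_boxS hq with h | h
  · calc ‖Fc q‖ ≤ gsE q.1 * gsE q.2 := normFc_le q (Or.inl h)
      _ = g1 q.1 * gsE q.2 := by rw [g1, if_pos h]
      _ ≤ wB q := le_add_of_nonneg_right (mul_nonneg (gsE_nonneg _) (g1_nonneg _))
  · calc ‖Fc q‖ ≤ gsE q.1 * gsE q.2 := normFc_le q (Or.inr h)
      _ = gsE q.1 * g1 q.2 := by rw [g1, if_pos h]
      _ ≤ wB q := le_add_of_nonneg_left (mul_nonneg (g1_nonneg _) (gsE_nonneg _))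

set_option maxHeartbeats 2000000 in
private lemma box_sum_gt : (68:ℝ)/25 < ∑ m ∈ Finset.Icc (-5:ℤ) 5, ∑ n ∈ Finset.Icc (-5:ℤ) 5,
    ((m:ℝ)^4 - 6*(m:ℝ)^2*(n:ℝ)^2 + (n:ℝ)^4) / (((m:ℝ)^2+(n:ℝ)^2)^4) := by
  have h : Finset.Icc (-5:ℤ) 5 = {-5,-4,-3,-2,-1,0,1,2,3,4,5} := by decide
  rw [h]
  norm_num [Finset.sum_insert, Finset.mem_insert]

end GaussEisensteinAux

/-- **Positivity of the weight-4 Eisenstein sum for the Gaussian lattice.**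
The sum `S = Σ (m + n·i)⁻⁴` over all nonzero Gaussian integers converges
absolutely and is a positive real number. -/
theorem gaussian_eisenstein_four_pos :
    Summable (fun p : {q : ℤ × ℤ // q ≠ 0} =>
      ‖((p.1.1 : ℂ) + (p.1.2 : ℂ) * Complex.I) ^ (-4 : ℤ)‖) ∧
    (∑' p : {q : ℤ × ℤ // q ≠ 0},
      ((p.1.1 : ℂ) + (p.1.2 : ℂ) * Complex.I) ^ (-4 : ℤ)).im = 0 ∧
    0 < (∑' p : {q : ℤ × ℤ // q ≠ 0},
      ((p.1.1 : ℂ) + (p.1.2 : ℂ) * Complex.I) ^ (-4 : ℤ)).re := by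
  have hsupp : Function.support Fc ⊆ {q : ℤ × ℤ | q ≠ 0} := by
    intro q hq
    simp only [Set.mem_setOf_eq]
    intro h0
    exact hq (by rw [h0, Fc_zero])
  have heq : (∑' p : {q : ℤ × ℤ // q ≠ 0},
      ((p.1.1 : ℂ) + (p.1.2 : ℂ) * Complex.I) ^ (-4 : ℤ))
      = ∑' q : ℤ × ℤ, Fc q := tsum_subtype_eq_of_support_subset hsupp
  refine ⟨?_, ?_, ?_⟩
  · exact sum_G.subtype {q : ℤ × ℤ | q ≠ 0}
  · rw [heq, Complex.im_tsum sum_Fc]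
    have he : ∑' q : ℤ × ℤ, (Fc ((Equiv.prodCongr (Equiv.refl ℤ) (Equiv.neg ℤ)) q)).im
        = ∑' q : ℤ × ℤ, (Fc q).im :=
      Equiv.tsum_eq ((Equiv.refl ℤ).prodCongr (Equiv.neg ℤ)) (fun q => (Fc q).im)
    have he2 : ∀ q : ℤ × ℤ, (Fc ((Equiv.prodCongr (Equiv.refl ℤ) (Equiv.neg ℤ)) q)).im
        = -(Fc q).im := by
      intro q
      have h3 : (Equiv.prodCongr (Equiv.refl ℤ) (Equiv.neg ℤ)) q = (q.1, -q.2) := rfl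
      rw [h3, Fc_conj]
      simp
    rw [tsum_congr he2, tsum_neg] at he
    linarith [he]
  · rw [heq, Complex.re_tsum sum_Fc]
    have hsplit := Summable.sum_add_tsum_compl (s := boxS) sum_R
    rw [← hsplit]
    have hGsub : Summable (fun q : ↑((boxS : Set (ℤ × ℤ))ᶜ) => ‖Fc ↑q‖) := sum_G.subtype _
    have hwsub : Summable (fun q : ↑((boxS : Set (ℤ × ℤ))ᶜ) => wB ↑q) := sum_wB.subtype _
    have habs : |∑' (q : ↑((boxS : Set (ℤ × ℤ))ᶜ)), (Fc ↑q).re| ≤ 68/25 := by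
      have h1 : Summable (fun q : ↑((boxS : Set (ℤ × ℤ))ᶜ) => ‖(Fc ↑q).re‖) := by
        refine Summable.of_nonneg_of_le (fun q => norm_nonneg _) (fun q => ?_) hGsub
        rw [Real.norm_eq_abs]; exact Complex.abs_re_le_norm _
      calc |∑' (q : ↑((boxS : Set (ℤ × ℤ))ᶜ)), (Fc ↑q).re|
          ≤ ∑' (q : ↑((boxS : Set (ℤ × ℤ))ᶜ)), ‖(Fc ↑q).re‖ := by
            rw [← Real.norm_eq_abs]
            exact norm_tsum_le_tsum_norm h1
        _ ≤ ∑' (q : ↑((boxS : Set (ℤ × ℤ))ᶜ)), ‖Fc ↑q‖ := by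
            refine Summable.tsum_le_tsum (fun q => ?_) h1 hGsub
            rw [Real.norm_eq_abs]; exact Complex.abs_re_le_norm _
        _ ≤ ∑' (q : ↑((boxS : Set (ℤ × ℤ))ᶜ)), wB ↑q := by
            refine Summable.tsum_le_tsum (fun q => ?_) hGsub hwsub
            exact G_le_wB (fun hmem => q.2 (Finset.mem_coe.mpr hmem))
        _ ≤ ∑' q : ℤ × ℤ, wB q := by
            rw [tsum_subtype]
            exact Summable.tsum_le_tsum (fun q => Set.indicator_le_self' (fun x _ => wB_nonneg x) q)
              (sum_wB.indicator _) sum_wB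
        _ ≤ 68/25 := tsum_wB_le
    have hbox : (68:ℝ)/25 < ∑ q ∈ boxS, (Fc q).re := by
      have hb : ∑ q ∈ boxS, (Fc q).re = ∑ m ∈ Finset.Icc (-5:ℤ) 5, ∑ n ∈ Finset.Icc (-5:ℤ) 5,
          ((m:ℝ)^4 - 6*(m:ℝ)^2*(n:ℝ)^2 + (n:ℝ)^4) / (((m:ℝ)^2+(n:ℝ)^2)^4) := by
        rw [boxS, Finset.sum_product]
        exact Finset.sum_congr rfl (fun m _ => Finset.sum_congr rfl (fun n _ => Fc_re (m, n)))
      rw [hb]; exact box_sum_gt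
    have h5 := (abs_le.mp habs).1
    linarith
end

section
/- Let ω = (−1 + √3·i)/2 ∈ ℂ be a primitive cube root of unity. Then the sum S = ∑ over pairs (m,n) ∈ ℤ × ℤ with (m,n) ≠ (0,0) of (m + n·ω)⁻⁶ is a positive real number: Im(S) = 0 and Re(S) > 0. -/
open Complex

noncomputable def aa (m : ℤ) : ℝ := (|(m:ℝ)|^3)⁻¹
noncomputable def bb (m : ℤ) : ℝ := if m = 1 ∨ m = -1 then 0 else ((m:ℝ)^6)⁻¹
def UU : Finset (ℤ×ℤ) := {(1,0),(-1,0),(0,1),(0,-1),(1,1),(-1,-1)}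
noncomputable def HH (p : ℤ×ℤ) : ℝ :=
  (if p.2 = 0 then bb p.1 else 0) + (if p.1 = 0 then bb p.2 else 0) + aa p.1 * aa p.2

lemma aa_nonneg (m : ℤ) : 0 ≤ aa m := by unfold aa; positivity
lemma bb_nonneg (m : ℤ) : 0 ≤ bb m := by unfold bb; split <;> positivity
lemma HH_nonneg (p : ℤ×ℤ) : 0 ≤ HH p := by
  unfold HH
  have := aa_nonneg p.1; have := aa_nonneg p.2
  have := bb_nonneg p.1; have := bb_nonneg p.2
  split <;> split <;> nlinarith

-- integer inequality
lemma int_bound (m n : ℤ) : |m*n| ≤ m^2 - m*n + n^2 := by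
  rw [abs_le]; constructor <;> nlinarith [sq_nonneg (m-n), sq_nonneg (m+n)]

noncomputable def Ff (ω : ℂ) (p : ℤ×ℤ) : ℂ := ((p.1:ℂ) + (p.2:ℂ)*ω)^(-6:ℤ)

lemma normsq_eq (ω : ℂ) (hω : ω = (-1 + (Real.sqrt 3 : ℂ) * Complex.I) / 2) (m n : ℤ) :
    Complex.normSq ((m:ℂ) + (n:ℂ)*ω) = ((m^2 - m*n + n^2 : ℤ) : ℝ) := by
  have hre : ω.re = -(1/2) := by rw [hω]; simp [Complex.div_re]; norm_num
  have him : ω.im = Real.sqrt 3 / 2 := by rw [hω]; simp [Complex.div_im]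
  have h3 : Real.sqrt 3 ^ 2 = 3 := Real.sq_sqrt (by norm_num)
  rw [Complex.normSq_apply]
  simp only [Complex.add_re, Complex.add_im, Complex.mul_re, Complex.mul_im, hre, him,
    Complex.intCast_re, Complex.intCast_im]
  push_cast; nlinarith [h3]

lemma norm_Ff (ω : ℂ) (hω : ω = (-1 + (Real.sqrt 3 : ℂ) * Complex.I) / 2) (p : ℤ×ℤ) :
    ‖Ff ω p‖ = (((p.1^2 - p.1*p.2 + p.2^2 : ℤ) : ℝ)^3)⁻¹ := by
  rw [Ff, norm_zpow, ← normsq_eq ω hω p.1 p.2]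
  rw [show (-6:ℤ) = -(6:ℕ) by norm_num, zpow_neg, zpow_natCast]
  congr 1
  rw [show (6:ℕ) = 2*3 by norm_num, pow_mul, Complex.sq_norm]

lemma pointwise_bound (ω : ℂ) (hω : ω = (-1 + (Real.sqrt 3 : ℂ) * Complex.I) / 2) (p : ℤ×ℤ) :
    (if p ∈ UU then 0 else ‖Ff ω p‖) ≤ HH p := by
  split
  · exact HH_nonneg p
  · rename_i hpU
    obtain ⟨m, n⟩ := p
    rw [norm_Ff ω hω]
    simp only [HH]
    have ea : aa (0:ℤ) = 0 := by simp [aa]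
    by_cases hn : n = 0
    · subst hn
      have hm1 : ¬(m = 1 ∨ m = -1) := by rintro (rfl|rfl) <;> simp [UU] at hpU
      have e3 : ((m^2 - m*0 + 0^2 : ℤ) : ℝ)^3 = ((m:ℝ))^6 := by push_cast; ring
      have eb : bb m = ((m:ℝ)^6)⁻¹ := by rw [bb, if_neg hm1]
      have h0 : (0:ℝ) ≤ (if m = 0 then bb 0 else 0) := by
        split; exacts [bb_nonneg 0, le_rfl]
      rw [if_pos rfl, ea, eb]
      push_cast
      ring_nf
      linarith
    · by_cases hm : m = 0
      · subst hm
        have hn1 : ¬(n = 1 ∨ n = -1) := by rintro (rfl|rfl) <;> simp [UU] at hpU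
        have e3 : ((0^2 - 0*n + n^2 : ℤ) : ℝ)^3 = ((n:ℝ))^6 := by push_cast; ring
        have eb : bb n = ((n:ℝ)^6)⁻¹ := by rw [bb, if_neg hn1]
        rw [if_neg hn, if_pos rfl, ea, eb]
        push_cast
        ring_nf
        linarith [aa_nonneg n]
      · rw [if_neg hn, if_neg hm]
        have h1 : (0:ℤ) < |m*n| := abs_pos.mpr (mul_ne_zero hm hn)
        have h2 : |m*n| ≤ m^2 - m*n + n^2 := int_bound m n
        have e : aa m * aa n = (((|m*n| : ℤ):ℝ)^3)⁻¹ := by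
          unfold aa
          rw [← mul_inv, ← mul_pow]
          congr 2
          push_cast [abs_mul]
          ring
        rw [zero_add, zero_add, e]
        apply inv_anti₀
        · positivity
        · have h1' : (0:ℝ) < ((|m*n| : ℤ):ℝ) := by exact_mod_cast h1
          have h2' : ((|m*n| : ℤ):ℝ) ≤ ((m^2 - m*n + n^2 : ℤ):ℝ) := by exact_mod_cast h2
          gcongr


lemma icc_succ (M : ℕ) : Finset.Icc (-(M:ℤ)-1) ((M:ℤ)+1)
    = insert (-(M:ℤ)-1) (insert ((M:ℤ)+1) (Finset.Icc (-(M:ℤ)) M)) := by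
  ext x; simp [Finset.mem_Icc]; omega


lemma sum_split (f : ℤ → ℝ) (M : ℕ) :
    ∑ m ∈ Finset.Icc (-((M+1:ℕ):ℤ)) ((M+1:ℕ):ℤ), f m
      = f (-(M:ℤ)-1) + (f ((M:ℤ)+1) + ∑ m ∈ Finset.Icc (-(M:ℤ)) M, f m) := by
  rw [show (-((M+1:ℕ):ℤ)) = -(M:ℤ)-1 by push_cast; ring,
      show (((M+1:ℕ)):ℤ) = (M:ℤ)+1 by push_cast; ring, icc_succ]
  rw [Finset.sum_insert (by simp [Finset.mem_Icc]; omega),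
      Finset.sum_insert (by simp [Finset.mem_Icc])]

lemma sum_aa (M : ℕ) (hM : 5 ≤ M) :
    ∑ m ∈ Finset.Icc (-(M:ℤ)) M, aa m ≤ 2*(259703/216000) - ((M:ℝ)*((M:ℝ)+1))⁻¹ := by
  induction M, hM using Nat.le_induction with
  | base =>
      have : Finset.Icc (-(5:ℤ)) 5 = ({-5,-4,-3,-2,-1,0,1,2,3,4,5} : Finset ℤ) := by decide
      rw [show ((5:ℕ):ℤ) = 5 by norm_num, this]
      norm_num [aa]
  | succ M hM ih =>
      rw [sum_split]
      have hMr : (5:ℝ) ≤ (M:ℝ) := by exact_mod_cast hM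
      have haval : aa (-(M:ℤ)-1) = (((M:ℝ)+1)^3)⁻¹ := by
        unfold aa; rw [show ((-(M:ℤ)-1 : ℤ):ℝ) = -((M:ℝ)+1) by push_cast; ring, abs_neg,
          _root_.abs_of_nonneg (by linarith)]
      have haval2 : aa ((M:ℤ)+1) = (((M:ℝ)+1)^3)⁻¹ := by
        unfold aa; rw [show (((M:ℤ)+1 : ℤ):ℝ) = ((M:ℝ)+1) by push_cast; ring,
          _root_.abs_of_nonneg (by linarith)]
      rw [haval, haval2]
      have e1 : ((M:ℝ)*((M:ℝ)+1))⁻¹ - (((M:ℝ)+1)*((M:ℝ)+1+1))⁻¹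
          = 2/((M:ℝ)*((M:ℝ)+1)*((M:ℝ)+1+1)) := by
        field_simp; ring
      have e2 : 2*(((M:ℝ)+1)^3)⁻¹ ≤ 2/((M:ℝ)*((M:ℝ)+1)*((M:ℝ)+1+1)) := by
        rw [show 2*(((M:ℝ)+1)^3)⁻¹ = 2/(((M:ℝ)+1)^3) by ring]
        gcongr
        nlinarith
      push_cast
      linarith [ih, e1, e2]

lemma sum_bb (M : ℕ) (hM : 1 ≤ M) :
    ∑ m ∈ Finset.Icc (-(M:ℤ)) M, bb m ≤ 1/16 - (8*(M:ℝ)*((M:ℝ)+1))⁻¹ := by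
  induction M, hM using Nat.le_induction with
  | base =>
      have : Finset.Icc (-(1:ℤ)) 1 = ({-1,0,1} : Finset ℤ) := by decide
      rw [show ((1:ℕ):ℤ) = 1 by norm_num, this]
      norm_num [bb]
  | succ M hM ih =>
      rw [sum_split]
      have hMr : (1:ℝ) ≤ (M:ℝ) := by exact_mod_cast hM
      have hne : ¬(-(M:ℤ)-1 = 1 ∨ -(M:ℤ)-1 = -1) := by omega
      have hne2 : ¬((M:ℤ)+1 = 1 ∨ (M:ℤ)+1 = -1) := by omega
      have haval : bb (-(M:ℤ)-1) = (((M:ℝ)+1)^6)⁻¹ := by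
        unfold bb; rw [if_neg hne, show ((-(M:ℤ)-1 : ℤ):ℝ) = -((M:ℝ)+1) by push_cast; ring]
        rw [show (-((M:ℝ)+1))^6 = ((M:ℝ)+1)^6 by ring]
      have haval2 : bb ((M:ℤ)+1) = (((M:ℝ)+1)^6)⁻¹ := by
        unfold bb; rw [if_neg hne2, show (((M:ℤ)+1 : ℤ):ℝ) = ((M:ℝ)+1) by push_cast; ring]
      rw [haval, haval2]
      have e1 : (8*(M:ℝ)*((M:ℝ)+1))⁻¹ - (8*((M:ℝ)+1)*((M:ℝ)+1+1))⁻¹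
          = 2/(8*(M:ℝ)*((M:ℝ)+1)*((M:ℝ)+1+1)) := by
        field_simp; ring
      have e2 : 2*(((M:ℝ)+1)^6)⁻¹ ≤ 2/(8*(M:ℝ)*((M:ℝ)+1)*((M:ℝ)+1+1)) := by
        rw [show 2*(((M:ℝ)+1)^6)⁻¹ = 2/(((M:ℝ)+1)^6) by ring]
        gcongr
        have h1 : (8:ℝ) ≤ ((M:ℝ)+1)^3 := by nlinarith [sq_nonneg ((M:ℝ)-1), hMr]
        have h2 : (M:ℝ)*((M:ℝ)+1)*((M:ℝ)+1+1) ≤ ((M:ℝ)+1)^3 := by nlinarith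
        have h3 : (0:ℝ) ≤ (M:ℝ)*((M:ℝ)+1)*((M:ℝ)+1+1) := by positivity
        nlinarith [mul_le_mul h1 h2 h3 (by positivity : (0:ℝ) ≤ ((M:ℝ)+1)^3)]
      push_cast
      linarith [ih, e1, e2]

lemma sum_G_le (ω : ℂ) (hω : ω = (-1 + (Real.sqrt 3 : ℂ) * Complex.I) / 2)
    (s : Finset (ℤ×ℤ)) :
    ∑ p ∈ s, (if p ∈ UU then 0 else ‖Ff ω p‖) ≤ 1/8 + (2*(259703/216000))^2 := by
  set M : ℕ := (s.sup fun p => p.1.natAbs ⊔ p.2.natAbs) ⊔ 5 with hMdef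
  have hM5 : 5 ≤ M := le_sup_right
  have hM1 : 1 ≤ M := le_trans (by norm_num) hM5
  set I : Finset ℤ := Finset.Icc (-(M:ℤ)) M with hIdef
  have h0I : (0:ℤ) ∈ I := by simp [hIdef, Finset.mem_Icc]
  have hsub : s ⊆ I ×ˢ I := by
    intro p hp
    have h1 : p.1.natAbs ⊔ p.2.natAbs ≤ M :=
      le_trans (Finset.le_sup (f := fun p : ℤ×ℤ => p.1.natAbs ⊔ p.2.natAbs) hp) le_sup_left
    simp only [hIdef, Finset.mem_product, Finset.mem_Icc]
    omega
  have step1 : ∑ p ∈ s, (if p ∈ UU then 0 else ‖Ff ω p‖)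
      ≤ ∑ p ∈ I ×ˢ I, (if p ∈ UU then 0 else ‖Ff ω p‖) := by
    apply Finset.sum_le_sum_of_subset_of_nonneg hsub
    intro p _ _
    split
    · exact le_refl 0
    · exact norm_nonneg _
  have step2 : ∑ p ∈ I ×ˢ I, (if p ∈ UU then 0 else ‖Ff ω p‖) ≤ ∑ p ∈ I ×ˢ I, HH p :=
    Finset.sum_le_sum (fun p _ => pointwise_bound ω hω p)
  have step3 : ∑ p ∈ I ×ˢ I, HH p
      = (∑ m ∈ I, ∑ n ∈ I, (if n = 0 then bb m else 0))
      + (∑ m ∈ I, ∑ n ∈ I, (if m = 0 then bb n else 0))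
      + (∑ m ∈ I, aa m) * (∑ n ∈ I, aa n) := by
    rw [Finset.sum_product, Finset.sum_mul_sum, ← Finset.sum_add_distrib]
    rw [← Finset.sum_add_distrib]
    apply Finset.sum_congr rfl
    intro m _
    rw [← Finset.sum_add_distrib, ← Finset.sum_add_distrib]
    apply Finset.sum_congr rfl
    intro n _
    simp only [HH]
  have hqa : ∑ m ∈ I, aa m ≤ 2*(259703/216000) := by
    have := sum_aa M hM5
    have hpos : (0:ℝ) ≤ ((M:ℝ)*((M:ℝ)+1))⁻¹ := by positivity
    rw [hIdef]; linarith
  have hqb : ∑ m ∈ I, bb m ≤ 1/16 := by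
    have := sum_bb M hM1
    have hpos : (0:ℝ) ≤ (8*(M:ℝ)*((M:ℝ)+1))⁻¹ := by positivity
    rw [hIdef]; linarith
  have e1 : ∑ m ∈ I, ∑ n ∈ I, (if n = 0 then bb m else 0) = ∑ m ∈ I, bb m := by
    apply Finset.sum_congr rfl
    intro m _
    rw [Finset.sum_ite_eq' I (0:ℤ) (fun _ => bb m), if_pos h0I]
  have e2 : ∑ m ∈ I, ∑ n ∈ I, (if m = 0 then bb n else 0)
      = ∑ m ∈ I, (if m = 0 then ∑ n ∈ I, bb n else 0) := by
    apply Finset.sum_congr rfl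
    intro m _
    split <;> simp
  have e2' : ∑ m ∈ I, (if m = 0 then ∑ n ∈ I, bb n else 0) = ∑ n ∈ I, bb n := by
    rw [Finset.sum_ite_eq' I (0:ℤ) (fun _ => ∑ n ∈ I, bb n), if_pos h0I]
  have haanonneg : (0:ℝ) ≤ ∑ m ∈ I, aa m := Finset.sum_nonneg (fun m _ => aa_nonneg m)
  have hsq : (∑ m ∈ I, aa m) * (∑ n ∈ I, aa n) ≤ (2*(259703/216000))^2 := by
    rw [sq]
    exact mul_le_mul hqa hqa haanonneg (by norm_num)
  calc ∑ p ∈ s, (if p ∈ UU then 0 else ‖Ff ω p‖)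
      ≤ ∑ p ∈ I ×ˢ I, HH p := le_trans step1 step2
    _ = _ := step3
    _ ≤ 1/16 + 1/16 + (2*(259703/216000))^2 := by
        rw [e1, e2, e2']
        have := hqb
        gcongr
    _ ≤ 1/8 + (2*(259703/216000))^2 := by norm_num

lemma omega_sq (ω : ℂ) (hω : ω = (-1 + (Real.sqrt 3 : ℂ) * Complex.I) / 2) :
    ω^2 + ω + 1 = 0 := by
  have h3 : ((Real.sqrt 3 : ℝ) : ℂ)^2 = 3 := by
    rw [← Complex.ofReal_pow, Real.sq_sqrt (by norm_num : (3:ℝ) ≥ 0)]; norm_num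
  rw [hω]; ring_nf
  rw [Complex.I_sq]; linear_combination (-(1:ℂ)/4) * h3

lemma zpow_neg6_of_pow6 (z : ℂ) (h : z^6 = 1) : z^(-6:ℤ) = 1 := by
  rw [show (-6:ℤ) = -((6:ℕ):ℤ) from rfl, zpow_neg, zpow_natCast, h, inv_one]

lemma Ff_unit (ω : ℂ) (hω : ω = (-1 + (Real.sqrt 3 : ℂ) * Complex.I) / 2) :
    ∀ p ∈ UU, Ff ω p = 1 := by
  have h2 := omega_sq ω hω
  have h3 : ω^3 = 1 := by linear_combination (ω - 1) * h2
  have h1p : (1+ω)^2 = ω := by linear_combination h2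
  intro p hp
  fin_cases hp <;> rw [Ff] <;> push_cast <;> apply zpow_neg6_of_pow6
  · norm_num
  · ring_nf
  · rw [show ((0:ℂ) + 1*ω)^6 = (ω^3)^2 by ring, h3]; norm_num
  · rw [show ((0:ℂ) + (-1)*ω)^6 = (ω^3)^2 by ring, h3]; norm_num
  · rw [show ((1:ℂ) + 1*ω)^6 = ((1+ω)^2)^3 by ring, h1p, h3]
  · rw [show ((-1:ℂ) + (-1)*ω)^6 = ((1+ω)^2)^3 by ring, h1p, h3]

lemma conj_omega (ω : ℂ) (hω : ω = (-1 + (Real.sqrt 3 : ℂ) * Complex.I) / 2) :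
    (starRingEnd ℂ) ω = -1 - ω := by
  rw [hω]; rw [Complex.ext_iff]
  constructor <;> simp [Complex.div_re, Complex.div_im] <;> ring

/-- **Positivity of the weight-6 Eisenstein sum for the Eisenstein lattice.**
Let `ω = (-1 + √3·i)/2` be a primitive cube root of unity. The sum
`S = Σ (m + n·ω)⁻⁶` over all nonzero Eisenstein integers converges absolutely
and is a positive real number. -/
theorem eisenstein_lattice_six_pos
    (ω : ℂ) (hω : ω = (-1 + (Real.sqrt 3 : ℂ) * Complex.I) / 2) :
    Summable (fun p : {q : ℤ × ℤ // q ≠ 0} =>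
      ‖((p.1.1 : ℂ) + (p.1.2 : ℂ) * ω) ^ (-6 : ℤ)‖) ∧
    (∑' p : {q : ℤ × ℤ // q ≠ 0},
      ((p.1.1 : ℂ) + (p.1.2 : ℂ) * ω) ^ (-6 : ℤ)).im = 0 ∧
    0 < (∑' p : {q : ℤ × ℤ // q ≠ 0},
      ((p.1.1 : ℂ) + (p.1.2 : ℂ) * ω) ^ (-6 : ℤ)).re := by
  have hGnonneg : ∀ p : ℤ×ℤ, 0 ≤ (if p ∈ UU then 0 else ‖Ff ω p‖) := fun p => by
    split; exacts [le_refl 0, norm_nonneg _]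
  have hGsumm : Summable (fun p : ℤ×ℤ => if p ∈ UU then 0 else ‖Ff ω p‖) :=
    summable_of_sum_le hGnonneg (sum_G_le ω hω)
  have hUnorm : ∀ p ∈ UU, ‖Ff ω p‖ = 1 := fun p hp => by rw [Ff_unit ω hω p hp, norm_one]
  have hFnsumm : Summable (fun p : ℤ×ℤ => ‖Ff ω p‖) := by
    apply summable_of_sum_le (fun p => norm_nonneg _)
      (c := 6 + (1/8 + (2*(259703/216000))^2))
    intro s
    have hsplitf : ∀ p : ℤ×ℤ, ‖Ff ω p‖ =
        (if p ∈ UU then ‖Ff ω p‖ else 0) + (if p ∈ UU then 0 else ‖Ff ω p‖) := fun p => by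
      split <;> ring
    calc ∑ p ∈ s, ‖Ff ω p‖
        = ∑ p ∈ s, ((if p ∈ UU then ‖Ff ω p‖ else 0) + (if p ∈ UU then 0 else ‖Ff ω p‖)) :=
          Finset.sum_congr rfl (fun p _ => hsplitf p)
      _ = ∑ p ∈ s, (if p ∈ UU then ‖Ff ω p‖ else 0)
          + ∑ p ∈ s, (if p ∈ UU then 0 else ‖Ff ω p‖) := Finset.sum_add_distrib
      _ ≤ 6 + (1/8 + (2*(259703/216000))^2) := by
          have h1 : ∑ p ∈ s, (if p ∈ UU then ‖Ff ω p‖ else 0) ≤ 6 := by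
            rw [Finset.sum_ite_mem]
            calc ∑ p ∈ s ∩ UU, ‖Ff ω p‖ ≤ ∑ p ∈ UU, ‖Ff ω p‖ :=
                  Finset.sum_le_sum_of_subset_of_nonneg (Finset.inter_subset_right)
                    (fun p _ _ => norm_nonneg _)
              _ = ∑ p ∈ UU, (1:ℝ) := Finset.sum_congr rfl hUnorm
              _ = 6 := by rw [Finset.sum_const, show UU.card = 6 from rfl]; norm_num
          linarith [sum_G_le ω hω s]
  have hFsumm : Summable (Ff ω) := hFnsumm.of_norm
  have hF0 : Ff ω 0 = 0 := by
    rw [Ff]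
    norm_num
  have hsubty : ∑' p : {q : ℤ×ℤ // q ≠ 0}, Ff ω p.1 = ∑' p : ℤ×ℤ, Ff ω p := by
    refine (tsum_subtype {q : ℤ×ℤ | q ≠ 0} (Ff ω)).trans (tsum_congr fun p => ?_)
    by_cases hp : p = 0
    · subst hp; simp [Set.indicator, hF0]
    · simp [Set.indicator, hp]
  refine ⟨hFnsumm.subtype _, ?_, ?_⟩
  · -- imaginary part zero
    show (∑' p : {q : ℤ×ℤ // q ≠ 0}, Ff ω p.1).im = 0
    rw [hsubty]
    apply Complex.conj_eq_iff_im.mp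
    have einv : Function.Involutive (fun p : ℤ×ℤ => (p.1 - p.2, -p.2)) := by
      intro p; simp [Prod.ext_iff]
    have hstar : ∀ p : ℤ×ℤ, (starRingEnd ℂ) (Ff ω p) = Ff ω (p.1 - p.2, -p.2) := by
      intro p
      rw [Ff, Ff, map_zpow₀]
      congr 1
      rw [map_add, map_mul, map_intCast, map_intCast, conj_omega ω hω]
      push_cast; ring
    calc (starRingEnd ℂ) (∑' p : ℤ×ℤ, Ff ω p)
        = ∑' p : ℤ×ℤ, (starRingEnd ℂ) (Ff ω p) := tsum_star
      _ = ∑' p : ℤ×ℤ, Ff ω ((Function.Involutive.toPerm _ einv) p) :=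
          tsum_congr (fun p => hstar p)
      _ = ∑' p : ℤ×ℤ, Ff ω p := (Function.Involutive.toPerm _ einv).tsum_eq (Ff ω)
  · -- positivity
    show 0 < (∑' p : {q : ℤ×ℤ // q ≠ 0}, Ff ω p.1).re
    rw [hsubty]
    have hsplit := Summable.sum_add_tsum_compl (s := UU) hFsumm
    have hhead : ∑ p ∈ UU, Ff ω p = 6 := by
      rw [Finset.sum_congr rfl (Ff_unit ω hω), Finset.sum_const,
        show UU.card = 6 from rfl]
      norm_num
    have htail : ‖∑' p : {x : ℤ×ℤ // x ∉ UU}, Ff ω p.1‖ ≤ 1/8 + (2*(259703/216000))^2 := by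
      calc ‖∑' p : {x : ℤ×ℤ // x ∉ UU}, Ff ω p.1‖
          ≤ ∑' p : {x : ℤ×ℤ // x ∉ UU}, ‖Ff ω p.1‖ :=
            norm_tsum_le_tsum_norm (hFnsumm.subtype _)
        _ = ∑' p : ℤ×ℤ, (if p ∈ UU then 0 else ‖Ff ω p‖) := by
            refine (tsum_subtype {x : ℤ×ℤ | x ∉ UU} (fun p => ‖Ff ω p‖)).trans
              (tsum_congr fun p => ?_)
            by_cases hp : p ∈ UU <;> simp [Set.indicator, hp]
        _ ≤ 1/8 + (2*(259703/216000))^2 := Summable.tsum_le_of_sum_le hGsumm (sum_G_le ω hω)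
    have hre : (∑' p : ℤ×ℤ, Ff ω p).re
        = 6 + (∑' p : {x : ℤ×ℤ // x ∉ UU}, Ff ω p.1).re := by
      rw [← hsplit, Complex.add_re, hhead]
      norm_num
      rfl
    rw [hre]
    have habs : |(∑' p : {x : ℤ×ℤ // x ∉ UU}, Ff ω p.1).re|
        ≤ ‖∑' p : {x : ℤ×ℤ // x ∉ UU}, Ff ω p.1‖ := Complex.abs_re_le_norm _
    have := abs_le.mp (le_trans habs htail)
    norm_num
    linarith [this.1]
end

section
/- Let p, q ∈ ℝ with −4·p³ − 27·q² > 0. Then the set {(x, y) ∈ ℝ × ℝ : y² = x³ + p·x + q}, with the topology induced from ℝ², has exactly two connected components. -/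
set_option maxHeartbeats 1000000 in
/-- **Real locus of an elliptic curve with positive discriminant.** If
`-4p³ - 27q² > 0`, then the plane affine cubic `{(x, y) : y² = x³ + px + q}`
has exactly two connected components. -/
theorem weierstrass_real_locus_two_components (p q : ℝ)
    (h : 0 < -4 * p ^ 3 - 27 * q ^ 2) :
    Nat.card (ConnectedComponents
      {v : ℝ × ℝ // v.2 ^ 2 = v.1 ^ 3 + p * v.1 + q}) = 2 := by
  set f : ℝ → ℝ := fun x => x ^ 3 + p * x + q with hfdef
  have hcont : Continuous f := by fun_prop
  have hp0 : p < 0 := by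
    by_contra hc; push_neg at hc
    nlinarith [pow_nonneg hc 3, sq_nonneg q]
  obtain ⟨m, hm, hm0⟩ : ∃ m : ℝ, m ^ 2 = -p / 3 ∧ 0 < m :=
    ⟨Real.sqrt (-p / 3), Real.sq_sqrt (by linarith), Real.sqrt_pos.mpr (by linarith)⟩
  have hpm : p = -3 * m ^ 2 := by rw [hm]; ring
  -- monotonicity facts
  have mono1 : ∀ a b, a < b → b ≤ -m → f a < f b := by
    intro a b hab hb
    simp only [hfdef]
    nlinarith [mul_pos (sub_pos.mpr hab) hm0, sq_nonneg (a + b), sq_nonneg (a - b),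
      mul_nonneg (sub_nonneg.mpr (hab.le.trans hb)) (sub_nonneg.mpr hb),
      mul_nonneg (sub_nonneg.mpr (hab.le.trans hb)) (sub_nonneg.mpr (hab.le.trans hb)),
      mul_pos hm0 hm0]
  have anti : ∀ a b, -m ≤ a → a < b → b ≤ m → f b < f a := by
    intro a b ha hab hb
    simp only [hfdef]
    nlinarith [mul_pos (sub_pos.mpr hab) hm0, mul_nonneg (sub_nonneg.mpr ha) (sub_nonneg.mpr hb),
      sq_nonneg (a + b), sq_nonneg (a - b),
      mul_nonneg (sub_nonneg.mpr ha) (sub_nonneg.mpr (ha.trans hab.le)),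
      mul_nonneg (sub_nonneg.mpr (hab.le.trans hb)) (sub_nonneg.mpr hb)]
  have mono2 : ∀ a b, m ≤ a → a < b → f a < f b := by
    intro a b ha hab
    simp only [hfdef]
    nlinarith [mul_pos (sub_pos.mpr hab) hm0, sq_nonneg (a + b), sq_nonneg (a - b),
      mul_nonneg (sub_nonneg.mpr ha) (sub_nonneg.mpr (ha.trans hab.le)), mul_pos hm0 hm0]
  -- values at ±m
  have hvals : f m < 0 ∧ 0 < f (-m) := by
    have hfm : f m * f (-m) < 0 := by
      have hid : f m * f (-m) = q ^ 2 + 4 * p ^ 3 / 27 := by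
        simp only [hfdef]; rw [hpm]; ring
      rw [hid]; linarith
    have hdiff : f m < f (-m) := by
      simp only [hfdef]; nlinarith [mul_pos (mul_pos hm0 hm0) hm0]
    constructor
    · by_contra hc; push_neg at hc; nlinarith
    · by_contra hc; push_neg at hc; nlinarith
  obtain ⟨hfm_neg, hfm_pos⟩ := hvals
  obtain ⟨c, hcm, hc_pos, hc_neg⟩ : ∃ c : ℝ, m < c ∧ 0 < f c ∧ f (-c) < 0 := by
    have habs1 : p ≤ |p| := le_abs_self p
    have habs2 : -p ≤ |p| := neg_le_abs p
    have habs3 : -q ≤ |q| := neg_le_abs q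
    have habs3' : q ≤ |q| := le_abs_self q
    have habs4 : (0:ℝ) ≤ |p| := abs_nonneg p
    have habs5 : (0:ℝ) ≤ |q| := abs_nonneg q
    refine ⟨m + |p| + |q| + 1, by linarith, ?_, ?_⟩
    · simp only [hfdef]
      nlinarith [mul_pos hm0 hm0, sq_nonneg (m + |p| + |q|), mul_nonneg habs4 habs5,
        mul_nonneg (mul_nonneg habs4 habs4) habs4, mul_pos (mul_pos hm0 hm0) hm0,
        mul_nonneg (mul_nonneg habs5 habs5) habs5, mul_nonneg (mul_nonneg habs4 habs5) hm0.le]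
    · simp only [hfdef]
      nlinarith [mul_pos hm0 hm0, sq_nonneg (m + |p| + |q|), mul_nonneg habs4 habs5,
        mul_nonneg (mul_nonneg habs4 habs4) habs4, mul_pos (mul_pos hm0 hm0) hm0,
        mul_nonneg (mul_nonneg habs5 habs5) habs5, mul_nonneg (mul_nonneg habs4 habs5) hm0.le]
  -- the three roots
  obtain ⟨r3, hr3mem, hr3⟩ : ∃ x ∈ Set.Icc m c, f x = 0 := by
    have hsub := intermediate_value_Icc hcm.le hcont.continuousOn
    obtain ⟨x, hx, hfx⟩ := hsub ⟨hfm_neg.le, hc_pos.le⟩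
    exact ⟨x, hx, hfx⟩
  obtain ⟨r2, hr2mem, hr2⟩ : ∃ x ∈ Set.Icc (-m) m, f x = 0 := by
    have hsub := intermediate_value_Icc' (by linarith : -m ≤ m) hcont.continuousOn
    obtain ⟨x, hx, hfx⟩ := hsub ⟨hfm_neg.le, hfm_pos.le⟩
    exact ⟨x, hx, hfx⟩
  obtain ⟨r1, hr1mem, hr1⟩ : ∃ x ∈ Set.Icc (-c) (-m), f x = 0 := by
    have hsub := intermediate_value_Icc (by linarith : -c ≤ -m) hcont.continuousOn
    obtain ⟨x, hx, hfx⟩ := hsub ⟨hc_neg.le, hfm_pos.le⟩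
    exact ⟨x, hx, hfx⟩
  have hr3m : m < r3 := hr3mem.1.lt_of_ne (by rintro rfl; linarith)
  have hr2m : r2 < m := hr2mem.2.lt_of_ne (by rintro rfl; linarith)
  have hr2m' : -m < r2 := hr2mem.1.lt_of_ne (by rintro rfl; linarith [hr2 ▸ hfm_pos])
  have hr1m : r1 < -m := hr1mem.2.lt_of_ne (by rintro rfl; linarith)
  have hr12 : r1 < r2 := by linarith
  have hr23 : r2 < r3 := by linarith
  -- sign facts
  have hpos_left : ∀ x, r1 ≤ x → x ≤ r2 → 0 ≤ f x := by
    intro x h1 h2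
    rcases le_or_gt x (-m) with hx | hx
    · rcases h1.eq_or_lt with rfl | hlt
      · exact hr1.ge
      · linarith [mono1 r1 x hlt hx]
    · rcases h2.eq_or_lt with rfl | hlt
      · exact hr2.ge
      · linarith [anti x r2 hx.le hlt hr2m.le]
  have hneg_lt_r1 : ∀ x, x < r1 → f x < 0 := by
    intro x hx; linarith [mono1 x r1 hx hr1m.le]
  have hneg_gap : ∀ x, r2 < x → x < r3 → f x < 0 := by
    intro x h1 h2
    rcases le_or_gt x m with hx | hx
    · linarith [anti r2 x hr2m'.le h1 hx]
    · linarith [mono2 x r3 hx.le h2]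
  have hpos_right : ∀ x, r3 ≤ x → 0 ≤ f x := by
    intro x h1
    rcases h1.eq_or_lt with rfl | hlt
    · exact hr3.ge
    · linarith [mono2 r3 x hr3m.le hlt]
  clear mono1 mono2 anti hm hpm hm0 hfm_neg hfm_pos hc_pos hc_neg hcm hr3mem hr2mem hr1mem
    hr3m hr2m hr2m' hr1m h hp0
  -- the two pieces in the plane
  set A : Set (ℝ × ℝ) := {v | v.2 ^ 2 = f v.1 ∧ v.1 ≤ r2} with hAdef
  set B : Set (ℝ × ℝ) := {v | v.2 ^ 2 = f v.1 ∧ r3 ≤ v.1} with hBdef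
  set gp : ℝ → ℝ × ℝ := fun x => (x, Real.sqrt (f x)) with hgpdef
  set gn : ℝ → ℝ × ℝ := fun x => (x, -Real.sqrt (f x)) with hgndef
  have hgp : Continuous gp := continuous_id.prodMk (Real.continuous_sqrt.comp hcont)
  have hgn : Continuous gn := continuous_id.prodMk (Real.continuous_sqrt.comp hcont).neg
  have hAeq : A = gp '' Set.Icc r1 r2 ∪ gn '' Set.Icc r1 r2 := by
    ext v
    constructor
    · rintro ⟨hv, hvle⟩
      have hge : r1 ≤ v.1 := by
        by_contra hc; push_neg at hc
        nlinarith [hneg_lt_r1 _ hc, sq_nonneg v.2]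
      have habs : Real.sqrt (f v.1) = |v.2| := by rw [← hv, Real.sqrt_sq_eq_abs]
      rcases abs_cases v.2 with ⟨he, _⟩ | ⟨he, _⟩
      · exact Or.inl ⟨v.1, ⟨hge, hvle⟩, Prod.ext rfl (by show Real.sqrt (f v.1) = v.2; rw [habs, he])⟩
      · exact Or.inr ⟨v.1, ⟨hge, hvle⟩, Prod.ext rfl (by show -Real.sqrt (f v.1) = v.2; rw [habs, he]; ring)⟩
    · rintro (⟨x, hx, rfl⟩ | ⟨x, hx, rfl⟩)
      · exact ⟨Real.sq_sqrt (hpos_left _ hx.1 hx.2), hx.2⟩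
      · exact ⟨by rw [neg_pow]; simp [Real.sq_sqrt (hpos_left _ hx.1 hx.2)]; rfl, hx.2⟩
  have hBeq : B = gp '' Set.Ici r3 ∪ gn '' Set.Ici r3 := by
    ext v
    constructor
    · rintro ⟨hv, hvle⟩
      have habs : Real.sqrt (f v.1) = |v.2| := by rw [← hv, Real.sqrt_sq_eq_abs]
      rcases abs_cases v.2 with ⟨he, _⟩ | ⟨he, _⟩
      · exact Or.inl ⟨v.1, Set.mem_Ici.mpr hvle, Prod.ext rfl (by show Real.sqrt (f v.1) = v.2; rw [habs, he])⟩
      · exact Or.inr ⟨v.1, Set.mem_Ici.mpr hvle, Prod.ext rfl (by show -Real.sqrt (f v.1) = v.2; rw [habs, he]; ring)⟩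
    · rintro (⟨x, hx, rfl⟩ | ⟨x, hx, rfl⟩)
      · exact ⟨Real.sq_sqrt (hpos_right _ hx), hx⟩
      · exact ⟨by rw [neg_pow]; simp [Real.sq_sqrt (hpos_right _ hx)]; rfl, hx⟩
  have hApre : IsPreconnected A := by
    rw [hAeq]
    have hmemp : (r1, (0:ℝ)) ∈ gp '' Set.Icc r1 r2 :=
      ⟨r1, ⟨le_refl _, hr12.le⟩, Prod.ext rfl (by simp [hgpdef, hr1])⟩
    have hmemn : (r1, (0:ℝ)) ∈ gn '' Set.Icc r1 r2 :=
      ⟨r1, ⟨le_refl _, hr12.le⟩, Prod.ext rfl (by simp [hgndef, hr1])⟩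
    exact IsPreconnected.union (r1, 0) hmemp hmemn
      (isPreconnected_Icc.image _ hgp.continuousOn)
      (isPreconnected_Icc.image _ hgn.continuousOn)
  have hBpre : IsPreconnected B := by
    rw [hBeq]
    have hmemp : (r3, (0:ℝ)) ∈ gp '' Set.Ici r3 :=
      ⟨r3, Set.self_mem_Ici, Prod.ext rfl (by simp [hgpdef, hr3])⟩
    have hmemn : (r3, (0:ℝ)) ∈ gn '' Set.Ici r3 :=
      ⟨r3, Set.self_mem_Ici, Prod.ext rfl (by simp [hgndef, hr3])⟩
    exact IsPreconnected.union (r3, 0) hmemp hmemn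
      (isPreconnected_Ici.image _ hgp.continuousOn)
      (isPreconnected_Ici.image _ hgn.continuousOn)
  -- pass to the subtype
  have hval : ∀ v : {v : ℝ × ℝ // v.2 ^ 2 = v.1 ^ 3 + p * v.1 + q}, (v : ℝ × ℝ).2 ^ 2 = f (v : ℝ × ℝ).1 := fun v => v.2
  set A' : Set {v : ℝ × ℝ // v.2 ^ 2 = v.1 ^ 3 + p * v.1 + q} := Subtype.val ⁻¹' A with hA'def
  set B' : Set {v : ℝ × ℝ // v.2 ^ 2 = v.1 ^ 3 + p * v.1 + q} := Subtype.val ⁻¹' B with hB'def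
  have hnotB : ∀ v : {v : ℝ × ℝ // v.2 ^ 2 = v.1 ^ 3 + p * v.1 + q}, v ∉ B' → v ∈ A' := by
    intro v hv
    refine ⟨hval v, ?_⟩
    by_contra hc; push_neg at hc
    have hlt : (v : ℝ × ℝ).1 < r3 := by
      by_contra hc2; push_neg at hc2; exact hv ⟨hval v, hc2⟩
    nlinarith [hneg_gap _ hc hlt, sq_nonneg (v : ℝ × ℝ).2, hval v]
  have hA'pre : IsPreconnected A' := by
    have himg : Subtype.val '' A' = A := by
      rw [hA'def, Set.image_preimage_eq_inter_range, Subtype.range_coe_subtype]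
      exact Set.inter_eq_left.mpr fun v hv => hv.1
    exact Topology.IsInducing.subtypeVal.isPreconnected_image.mp
      (by rw [← himg] at hApre; exact hApre)
  have hB'pre : IsPreconnected B' := by
    have himg : Subtype.val '' B' = B := by
      rw [hB'def, Set.image_preimage_eq_inter_range, Subtype.range_coe_subtype]
      exact Set.inter_eq_left.mpr fun v hv => hv.1
    exact Topology.IsInducing.subtypeVal.isPreconnected_image.mp
      (by rw [← himg] at hBpre; exact hBpre)
  have hB'clopen : IsClopen B' := by
    constructor
    · have heq : B' = (fun v : {v : ℝ × ℝ // v.2 ^ 2 = v.1 ^ 3 + p * v.1 + q} => (v : ℝ × ℝ).1) ⁻¹' Set.Ici r3 := by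
        ext v; exact ⟨fun hv => hv.2, fun hv => ⟨hval v, hv⟩⟩
      rw [heq]
      exact IsClosed.preimage (continuous_fst.comp continuous_subtype_val) isClosed_Ici
    · have heq : B' = (fun v : {v : ℝ × ℝ // v.2 ^ 2 = v.1 ^ 3 + p * v.1 + q} => (v : ℝ × ℝ).1) ⁻¹' Set.Ioi r2 := by
        ext v
        constructor
        · intro hv; exact lt_of_lt_of_le hr23 hv.2
        · intro hv
          refine ⟨hval v, ?_⟩
          by_contra hc; push_neg at hc
          nlinarith [hneg_gap _ hv hc, sq_nonneg (v : ℝ × ℝ).2, hval v]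
      rw [heq]
      exact IsOpen.preimage (continuous_fst.comp continuous_subtype_val) isOpen_Ioi
  -- the Boolean invariant
  have hφ : Continuous B'.boolIndicator := (continuous_boolIndicator_iff_isClopen B').mpr hB'clopen
  have key : Function.Bijective hφ.connectedComponentsLift := by
    constructor
    · intro x y hxy
      obtain ⟨a, rfl⟩ := ConnectedComponents.surjective_coe x
      obtain ⟨b, rfl⟩ := ConnectedComponents.surjective_coe y
      rw [hφ.connectedComponentsLift_apply_coe, hφ.connectedComponentsLift_apply_coe] at hxy
      rw [ConnectedComponents.coe_eq_coe]
      by_cases hmem : a ∈ B'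
      · have hb : b ∈ B' := by
          rw [Set.mem_iff_boolIndicator, ← hxy, ← Set.mem_iff_boolIndicator]; exact hmem
        exact (connectedComponent_eq (hB'pre.subset_connectedComponent hb hmem)).symm
      · have hb : b ∉ B' := by
          rw [Set.mem_iff_boolIndicator, ← hxy, ← Set.mem_iff_boolIndicator]; exact hmem
        exact (connectedComponent_eq (hA'pre.subset_connectedComponent (hnotB b hb) (hnotB a hmem))).symm
    · intro bl
      have hmemA : (⟨(r1, 0), by simpa using hr1.symm⟩ : {v : ℝ × ℝ // v.2 ^ 2 = v.1 ^ 3 + p * v.1 + q}) ∉ B' := by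
        intro hc; have h2 := hc.2; simp only at h2; linarith
      have hmemB : (⟨(r3, 0), by simpa using hr3.symm⟩ : {v : ℝ × ℝ // v.2 ^ 2 = v.1 ^ 3 + p * v.1 + q}) ∈ B' :=
        ⟨by simpa using hr3.symm, le_refl _⟩
      cases bl
      · refine ⟨ConnectedComponents.mk ⟨(r1, 0), by simpa using hr1.symm⟩, ?_⟩
        rw [hφ.connectedComponentsLift_apply_coe]
        simp [Set.boolIndicator, hmemA]
      · refine ⟨ConnectedComponents.mk ⟨(r3, 0), by simpa using hr3.symm⟩, ?_⟩
        rw [hφ.connectedComponentsLift_apply_coe]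
        simp [Set.boolIndicator, hmemB]
  have hcard := Nat.card_eq_of_bijective _ key
  rw [hcard]
  simp
end

section
/- Let p, q ∈ ℝ with −4·p³ − 27·q² < 0. Then the set {(x, y) ∈ ℝ × ℝ : y² = x³ + p·x + q}, with the topology induced from ℝ², is connected. -/
/-- **Real locus of an elliptic curve with negative discriminant.** If
`-4p³ - 27q² < 0`, then the plane affine cubic `{(x, y) : y² = x³ + px + q}`
is connected. -/
theorem weierstrass_real_locus_connected (p q : ℝ)
    (h : -4 * p ^ 3 - 27 * q ^ 2 < 0) :
    IsConnected {v : ℝ × ℝ | v.2 ^ 2 = v.1 ^ 3 + p * v.1 + q} := by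
  -- the cubic f
  set f : ℝ → ℝ := fun x => x ^ 3 + p * x + q with hf
  have hfc : Continuous f := by continuity
  -- existence of a real root by IVT
  obtain ⟨r, hr⟩ : ∃ r : ℝ, f r = 0 := by
    set M : ℝ := |p| + |q| + 1 with hM
    have hM1 : (1 : ℝ) ≤ M := by simp only [hM]; nlinarith [abs_nonneg p, abs_nonneg q]
    have hp1 : -|p| ≤ p := neg_abs_le p
    have hp2 : p ≤ |p| := le_abs_self p
    have hq1 : -|q| ≤ q := neg_abs_le q
    have hq2 : q ≤ |q| := le_abs_self q
    have hfm : f (-M) ≤ 0 := by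
      simp only [hf]
      nlinarith [abs_nonneg p, abs_nonneg q, sq_nonneg M]
    have hfM : 0 ≤ f M := by
      simp only [hf]
      nlinarith [abs_nonneg p, abs_nonneg q, sq_nonneg M]
    have := intermediate_value_Icc (by linarith : -M ≤ M) hfc.continuousOn
    obtain ⟨r, _, hr⟩ := this ⟨hfm, hfM⟩
    exact ⟨r, hr⟩
  have hq : q = -r ^ 3 - p * r := by simp only [hf] at hr; linarith
  -- key discriminant consequence: the quadratic factor is positive definite
  have hd : 0 < 3 * r ^ 2 + 4 * p := by
    by_contra hd'
    push_neg at hd'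
    rw [hq] at h
    nlinarith [mul_nonpos_of_nonneg_of_nonpos (sq_nonneg (p + 3 * r ^ 2)) (by linarith : 3 * r ^ 2 + 4 * p ≤ 0)]
  have hquad : ∀ x : ℝ, 0 < x ^ 2 + r * x + (r ^ 2 + p) := by
    intro x
    nlinarith [sq_nonneg (2 * x + r)]
  have hfact : ∀ x : ℝ, f x = (x - r) * (x ^ 2 + r * x + (r ^ 2 + p)) := by
    intro x; simp only [hf]; rw [hq]; ring
  have hpos : ∀ x, r ≤ x → 0 ≤ f x := by
    intro x hx
    rw [hfact x]
    exact mul_nonneg (by linarith) (hquad x).le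
  have hneg : ∀ x, x < r → f x < 0 := by
    intro x hx
    rw [hfact x]
    exact mul_neg_of_neg_of_pos (by linarith) (hquad x)
  -- the two half-branches
  have hcontA : Continuous fun x : ℝ => (x, Real.sqrt (f x)) := by continuity
  have hcontB : Continuous fun x : ℝ => (x, -Real.sqrt (f x)) := by continuity
  have hA : IsConnected ((fun x : ℝ => (x, Real.sqrt (f x))) '' Set.Ici r) :=
    isConnected_Ici.image _ hcontA.continuousOn
  have hB : IsConnected ((fun x : ℝ => (x, -Real.sqrt (f x))) '' Set.Ici r) :=
    isConnected_Ici.image _ hcontB.continuousOn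
  have hset : {v : ℝ × ℝ | v.2 ^ 2 = v.1 ^ 3 + p * v.1 + q} =
      ((fun x : ℝ => (x, Real.sqrt (f x))) '' Set.Ici r) ∪
      ((fun x : ℝ => (x, -Real.sqrt (f x))) '' Set.Ici r) := by
    ext ⟨x, y⟩
    simp only [Set.mem_setOf_eq, Set.mem_union, Set.mem_image, Set.mem_Ici, Prod.mk.injEq]
    constructor
    · intro hxy
      have hxy' : y ^ 2 = f x := hxy
      have hfx : 0 ≤ f x := hxy' ▸ sq_nonneg y
      have hxr : r ≤ x := by
        by_contra hxr
        push_neg at hxr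
        exact absurd hfx (not_le.mpr (hneg x hxr))
      have hsq : Real.sqrt (f x) = |y| := by
        rw [← hxy', Real.sqrt_sq_eq_abs]
      rcases le_or_gt 0 y with hy | hy
      · exact Or.inl ⟨x, hxr, rfl, by rw [hsq, abs_of_nonneg hy]⟩
      · exact Or.inr ⟨x, hxr, rfl, by rw [hsq, abs_of_neg hy]; ring⟩
    · rintro (⟨x', hx', rfl, rfl⟩ | ⟨x', hx', rfl, rfl⟩) <;>
        simp [hf, Real.sq_sqrt (show (0:ℝ) ≤ x' ^ 3 + p * x' + q from hpos x' hx')]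
  rw [hset]
  refine hA.union ⟨(r, 0), ?_, ?_⟩ hB
  · exact ⟨r, le_refl r, by simp [hr]⟩
  · exact ⟨r, le_refl r, by simp [hr]⟩
end
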